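/- arXiv:2309.08445 — 5 statements merged into one kernel-verified Lean document; each statement's English description precedes it below -/
import Mathlib

section
/- Let 0 ≤ μ < 1/2 and x > 0. Then M(1/2+μ, 1+2μ, x) ≥ e^{x/2} and M_{0,μ}(x) > x^{1/2+μ}; moreover the function x ↦ M_{0,μ}(x) is monotone increasing on (0,∞). -/
open Complex

/-- The Kummer confluent hypergeometric series `M(a,b,ζ) = ∑ (a)_s/((b)_s s!) ζ^s`. -/
noncomputable def kummerM (a b ζ : ℂ) : ℂ :=
  ∑' s : ℕ, ((ascPochhammer ℂ s).eval a / ((ascPochhammer ℂ s).eval b * (s.factorial : ℂ))) * ζ ^ s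

/-- The Whittaker function `M_{0,γ}(ζ) = e^{-ζ/2} ζ^{1/2+γ} M(1/2+γ, 1+2γ, ζ)`,
with the principal branch of the complex power. -/
noncomputable def whittakerM (γ ζ : ℂ) : ℂ :=
  Complex.exp (-ζ / 2) * ζ ^ ((1 : ℂ) / 2 + γ) * kummerM (1 / 2 + γ) (1 + 2 * γ) ζ

/-!
Put `ν = 1/2 + μ > 0`. The coefficients `c_s = (ν)_s / ((2ν)_s s!)` of `M(ν, 2ν, x)` satisfy
`(1/2)^s / s! ≤ c_s ≤ 1/s!`, strictly on the left at `s = 2`, so comparing with the exponential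
series gives `M(ν, 2ν, x) > e^{x/2}` and hence `M_{0,μ}(x) = e^{-x/2} x^ν M(ν, 2ν, x) > x^ν`.
For monotonicity, `(e^{-x/2} x^ν M)' = e^{-x/2} x^{ν-1} (ν M + x M' - x M / 2)`, and the
coefficient of `x^{s+1}` in the bracket is `(ν + s + 1) c_{s+1} - c_s / 2 ≥ 0`, so the bracket is
at least its constant term `ν`.
-/

open Polynomial Nat

noncomputable def kummerCoeff (a b : ℝ) (s : ℕ) : ℝ :=
  (ascPochhammer ℝ s).eval a / ((ascPochhammer ℝ s).eval b * s !)

noncomputable def kummerMReal (a b x : ℝ) : ℝ :=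
  ∑' s : ℕ, kummerCoeff a b s * x ^ s

lemma ascPochhammer_eval_ofReal (s : ℕ) (r : ℝ) :
    (ascPochhammer ℂ s).eval (r : ℂ) = (((ascPochhammer ℝ s).eval r : ℝ) : ℂ) := by
  rw [← ascPochhammer_map Complex.ofRealHom]
  exact eval_map_apply Complex.ofRealHom r

lemma kummerM_ofReal (a b x : ℝ) : kummerM a b x = kummerMReal a b x := by
  rw [kummerM, kummerMReal, Complex.ofReal_tsum]
  congr 1
  funext s
  simp only [kummerCoeff, ascPochhammer_eval_ofReal]
  push_cast
  rfl

section Coefficients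

variable {a b : ℝ}

@[simp]
lemma kummerCoeff_zero (a b : ℝ) : kummerCoeff a b 0 = 1 := by
  simp [kummerCoeff]

lemma kummerCoeff_succ (a b : ℝ) (s : ℕ) :
    kummerCoeff a b (s + 1) = kummerCoeff a b s * ((a + s) / ((b + s) * (s + 1))) := by
  simp only [kummerCoeff, ascPochhammer_succ_eval, factorial_succ, cast_mul, cast_succ]
  rw [_root_.div_mul_div_comm]
  congr 1
  ring

lemma kummerCoeff_pos (ha : 0 < a) (hb : 0 < b) (s : ℕ) : 0 < kummerCoeff a b s := by
  have := ascPochhammer_pos s a ha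
  have := ascPochhammer_pos s b hb
  unfold kummerCoeff
  positivity

lemma kummerCoeff_le_inv_factorial (ha : 0 < a) (hab : a ≤ b) (s : ℕ) :
    kummerCoeff a b s ≤ (s ! : ℝ)⁻¹ := by
  induction s with
  | zero => simp
  | succ s ih =>
    have hb : 0 < b := ha.trans_le hab
    have hratio : (a + s) / ((b + s) * (s + 1)) ≤ ((s : ℝ) + 1)⁻¹ := by
      rw [← one_div, div_le_div_iff₀ (by positivity) (by positivity)]
      nlinarith [(cast_nonneg s : (0 : ℝ) ≤ s)]
    rw [kummerCoeff_succ, factorial_succ, cast_mul, cast_succ, mul_inv,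
      mul_comm ((s : ℝ) + 1)⁻¹]
    exact mul_le_mul ih hratio (by positivity) (by positivity)

lemma div_pow_div_factorial_le_kummerCoeff (ha : 0 < a) (hab : a ≤ b) (s : ℕ) :
    (a / b) ^ s / s ! ≤ kummerCoeff a b s := by
  induction s with
  | zero => simp
  | succ s ih =>
    have hb : 0 < b := ha.trans_le hab
    have hratio : a / b / (s + 1) ≤ (a + s) / ((b + s) * (s + 1)) := by
      rw [div_div, div_le_div_iff₀ (by positivity) (by positivity)]
      have : a * (b + s) ≤ (a + s) * b := by nlinarith [(cast_nonneg s : (0 : ℝ) ≤ s)]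
      nlinarith [(cast_nonneg s : (0 : ℝ) ≤ s)]
    calc (a / b) ^ (s + 1) / (s + 1) ! = (a / b) ^ s / s ! * (a / b / (s + 1)) := by
          rw [factorial_succ, pow_succ]; push_cast; field_simp
      _ ≤ kummerCoeff a b s * ((a + s) / ((b + s) * (s + 1))) :=
          mul_le_mul ih hratio (by positivity) (kummerCoeff_pos ha hb s).le
      _ = kummerCoeff a b (s + 1) := (kummerCoeff_succ a b s).symm

lemma div_pow_two_div_two_lt_kummerCoeff_two (ha : 0 < a) (hab : a < b) :
    (a / b) ^ 2 / 2 < kummerCoeff a b 2 := by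
  have hb : 0 < b := ha.trans hab
  have hc2 : kummerCoeff a b 2 = a / b * ((a + 1) / ((b + 1) * 2)) := by
    rw [kummerCoeff_succ, kummerCoeff_succ, kummerCoeff_zero]
    push_cast
    ring
  have hratio : a / b < (a + 1) / (b + 1) := by
    rw [div_lt_div_iff₀ hb (by linarith)]
    linarith
  rw [hc2, sq, mul_div_assoc, ← div_div]
  exact mul_lt_mul_of_pos_left (div_lt_div_of_pos_right hratio (by norm_num)) (by positivity)

lemma kummerCoeff_div_two_le (ha : 0 < a) (s : ℕ) :
    kummerCoeff a (2 * a) s / 2 ≤ kummerCoeff a (2 * a) (s + 1) * (a + s + 1) := by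
  have hratio : (1 : ℝ) / 2 ≤ (a + s) / ((2 * a + s) * (s + 1)) * (a + s + 1) := by
    rw [div_mul_eq_mul_div, le_div_iff₀ (by positivity)]
    nlinarith [(cast_nonneg s : (0 : ℝ) ≤ s)]
  rw [kummerCoeff_succ, mul_assoc, div_eq_mul_one_div]
  exact mul_le_mul_of_nonneg_left hratio (kummerCoeff_pos ha (by linarith) s).le

end Coefficients

section PowerSeries

variable {c : ℕ → ℝ}

lemma summable_mul_pow_of_abs_le_inv_factorial (hc : ∀ s, |c s| ≤ (s ! : ℝ)⁻¹) (x : ℝ) :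
    Summable fun s => c s * x ^ s := by
  refine (Real.summable_pow_div_factorial |x|).of_norm_bounded fun s => ?_
  rw [norm_mul, norm_pow, Real.norm_eq_abs, Real.norm_eq_abs, div_eq_inv_mul]
  exact mul_le_mul_of_nonneg_right (hc s) (by positivity)

lemma norm_mul_nat_mul_pow_le (hc : ∀ s, |c s| ≤ (s ! : ℝ)⁻¹) {R y : ℝ} (hR : 1 ≤ R)
    (hy : |y| ≤ R) (s : ℕ) : ‖c s * (s * y ^ (s - 1))‖ ≤ (2 * R) ^ s / s ! := by
  have hs : (s : ℝ) ≤ 2 ^ s := by exact_mod_cast s.lt_two_pow_self.le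
  have hpow : |y| ^ (s - 1) ≤ R ^ s :=
    (pow_le_pow_left₀ (abs_nonneg y) hy _).trans (pow_le_pow_right₀ hR (s.sub_le 1))
  rw [norm_mul, norm_mul, norm_pow, Real.norm_eq_abs, Real.norm_eq_abs, Nat.abs_cast,
    Real.norm_eq_abs, mul_pow, div_eq_inv_mul]
  exact mul_le_mul (hc s) (mul_le_mul hs hpow (by positivity) (by positivity)) (by positivity)
    (by positivity)

lemma summable_mul_nat_mul_pow_of_abs_le_inv_factorial (hc : ∀ s, |c s| ≤ (s ! : ℝ)⁻¹)
    (x : ℝ) : Summable fun s => c s * (s * x ^ (s - 1)) :=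
  (Real.summable_pow_div_factorial _).of_norm_bounded
    (norm_mul_nat_mul_pow_le hc (le_add_of_nonneg_left (abs_nonneg x)) (le_add_of_nonneg_right
      zero_le_one))

lemma hasDerivAt_tsum_mul_pow_of_abs_le_inv_factorial (hc : ∀ s, |c s| ≤ (s ! : ℝ)⁻¹)
    (x : ℝ) :
    HasDerivAt (fun y => ∑' s, c s * y ^ s) (∑' s, c s * (s * x ^ (s - 1))) x := by
  set R := |x| + 1
  have hR : 1 ≤ R := le_add_of_nonneg_left (abs_nonneg x)
  refine hasDerivAt_tsum_of_isPreconnected (Real.summable_pow_div_factorial (2 * R))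
    Metric.isOpen_ball (convex_ball 0 R).isPreconnected
    (fun s y _ => (hasDerivAt_pow s y).const_mul (c s)) (fun s y hy => ?_)
    (Metric.mem_ball_self (by positivity)) (summable_mul_pow_of_abs_le_inv_factorial hc 0) ?_
  · rw [mem_ball_zero_iff, Real.norm_eq_abs] at hy
    exact norm_mul_nat_mul_pow_le hc hR hy.le s
  · rw [mem_ball_zero_iff, Real.norm_eq_abs]
    exact lt_add_one _

end PowerSeries

section RealKummer

variable {a b : ℝ}

lemma abs_kummerCoeff_le_inv_factorial (ha : 0 < a) (hab : a ≤ b) (s : ℕ) :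
    |kummerCoeff a b s| ≤ (s ! : ℝ)⁻¹ := by
  rw [abs_of_pos (kummerCoeff_pos ha (ha.trans_le hab) s)]
  exact kummerCoeff_le_inv_factorial ha hab s

lemma exp_div_mul_lt_kummerMReal (ha : 0 < a) (hab : a < b) {x : ℝ} (hx : 0 < x) :
    Real.exp (a / b * x) < kummerMReal a b x := by
  have hexp : HasSum (fun s : ℕ => (a / b * x) ^ s / s !) (Real.exp (a / b * x)) := by
    rw [Real.exp_eq_exp_ℝ]
    exact NormedSpace.expSeries_div_hasSum_exp _
  have hterm (s : ℕ) : (a / b * x) ^ s / s ! = (a / b) ^ s / s ! * x ^ s := by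
    rw [mul_pow]; ring
  have hM := summable_mul_pow_of_abs_le_inv_factorial
    (abs_kummerCoeff_le_inv_factorial ha hab.le) x
  refine hasSum_lt (i := 2) (fun s => ?_) ?_ hexp hM.hasSum
  · rw [hterm]
    exact mul_le_mul_of_nonneg_right (div_pow_div_factorial_le_kummerCoeff ha hab.le s)
      (by positivity)
  · rw [hterm, factorial_two, cast_two]
    exact mul_lt_mul_of_pos_right (div_pow_two_div_two_lt_kummerCoeff_two ha hab) (by positivity)

lemma half_mul_kummerMReal_add_le (ha : 0 < a) {x : ℝ} (hx : 0 ≤ x) :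
    x / 2 * kummerMReal a (2 * a) x + a ≤
      a * kummerMReal a (2 * a) x +
        x * ∑' s : ℕ, kummerCoeff a (2 * a) s * (s * x ^ (s - 1)) := by
  set c := kummerCoeff a (2 * a)
  have hc := abs_kummerCoeff_le_inv_factorial ha (by linarith : a ≤ 2 * a)
  have hS := (summable_mul_pow_of_abs_le_inv_factorial hc x).hasSum
  have hD := (summable_mul_nat_mul_pow_of_abs_le_inv_factorial hc x).hasSum
  have hcomb : HasSum (fun s => c s * (a + s) * x ^ s)
      (a * kummerMReal a (2 * a) x + x * ∑' s, c s * (s * x ^ (s - 1))) := by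
    refine ((hS.mul_left a).add (hD.mul_left x)).congr_fun fun s => ?_
    rcases s with _ | s
    · simp [c]
    · simp only [add_tsub_cancel_right, pow_succ]
      push_cast
      ring
  have hshift := (hasSum_nat_add_iff' 1).mpr hcomb
  have hhalf : HasSum (fun s => c s / 2 * x ^ (s + 1)) (x / 2 * kummerMReal a (2 * a) x) := by
    refine (hS.mul_left (x / 2)).congr_fun fun s => ?_
    ring
  have hle := hasSum_le (fun s => ?_) hhalf hshift
  · simp only [Finset.range_one, Finset.sum_singleton, CharP.cast_eq_zero, add_zero, pow_zero,
      mul_one, c, kummerCoeff_zero, one_mul] at hle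
    linarith
  · push_cast
    exact mul_le_mul_of_nonneg_right (by simpa [add_assoc] using kummerCoeff_div_two_le ha s)
      (by positivity)

end RealKummer

section Whittaker

variable {a : ℝ}

lemma hasDerivAt_exp_mul_rpow_mul_kummerMReal (ha : 0 < a) {x : ℝ} (hx : 0 < x) :
    HasDerivAt (fun y => Real.exp (-y / 2) * y ^ a * kummerMReal a (2 * a) y)
      (Real.exp (-x / 2) * x ^ (a - 1) * (a * kummerMReal a (2 * a) x +
        x * ∑' s : ℕ, kummerCoeff a (2 * a) s * (s * x ^ (s - 1)) -
        x / 2 * kummerMReal a (2 * a) x)) x := by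
  have hexp : HasDerivAt (fun y : ℝ => Real.exp (-y / 2)) (Real.exp (-x / 2) * (-1 / 2)) x :=
    ((hasDerivAt_neg x).div_const 2).exp
  have hpow : HasDerivAt (fun y : ℝ => y ^ a) (a * x ^ (a - 1)) x :=
    Real.hasDerivAt_rpow_const (Or.inl hx.ne')
  have hS := hasDerivAt_tsum_mul_pow_of_abs_le_inv_factorial
    (abs_kummerCoeff_le_inv_factorial ha (by linarith : a ≤ 2 * a)) x
  refine ((hexp.mul hpow).mul hS).congr_deriv ?_
  rw [Pi.mul_apply,
    show x ^ a = x ^ (a - 1) * x by rw [← Real.rpow_add_one hx.ne', sub_add_cancel]]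
  unfold kummerMReal
  ring

lemma strictMonoOn_exp_mul_rpow_mul_kummerMReal (ha : 0 < a) :
    StrictMonoOn (fun y => Real.exp (-y / 2) * y ^ a * kummerMReal a (2 * a) y) (Set.Ioi 0) := by
  refine strictMonoOn_of_deriv_pos (convex_Ioi 0)
    (fun x hx => (hasDerivAt_exp_mul_rpow_mul_kummerMReal ha hx).continuousAt.continuousWithinAt)
    (fun x hx => ?_)
  rw [interior_Ioi] at hx
  rw [(hasDerivAt_exp_mul_rpow_mul_kummerMReal ha hx).deriv]
  have := half_mul_kummerMReal_add_le ha hx.le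
  have : 0 < x ^ (a - 1) := Real.rpow_pos_of_pos hx _
  exact mul_pos (by positivity) (by linarith)

lemma whittakerM_ofReal (μ : ℝ) {x : ℝ} (hx : 0 < x) :
    whittakerM μ x =
      (Real.exp (-x / 2) * x ^ (1 / 2 + μ) * kummerMReal (1 / 2 + μ) (1 + 2 * μ) x : ℝ) := by
  rw [whittakerM, show (1 : ℂ) / 2 + μ = (1 / 2 + μ : ℝ) by push_cast; ring,
    show 1 + 2 * (μ : ℂ) = (1 + 2 * μ : ℝ) by push_cast; ring, kummerM_ofReal,
    Complex.ofReal_mul, Complex.ofReal_mul, Complex.ofReal_exp, Complex.ofReal_cpow hx.le]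
  push_cast
  ring

end Whittaker

theorem stmt0_general (μ : ℝ) (hμ0 : 0 ≤ μ) :
    (∀ x : ℝ, 0 < x →
      (kummerM (1 / 2 + (μ : ℂ)) (1 + 2 * (μ : ℂ)) (x : ℂ)).im = 0 ∧
      Real.exp (x / 2) ≤ (kummerM (1 / 2 + (μ : ℂ)) (1 + 2 * (μ : ℂ)) (x : ℂ)).re ∧
      (whittakerM (μ : ℂ) (x : ℂ)).im = 0 ∧
      x ^ ((1 : ℝ) / 2 + μ) < (whittakerM (μ : ℂ) (x : ℂ)).re) ∧
    StrictMonoOn (fun x : ℝ => (whittakerM (μ : ℂ) (x : ℂ)).re) (Set.Ioi 0) := by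
  set ν : ℝ := 1 / 2 + μ
  have hν : 0 < ν := by positivity
  have hb : 1 + 2 * μ = 2 * ν := by ring
  have hK (x : ℝ) :
      kummerM (1 / 2 + (μ : ℂ)) (1 + 2 * (μ : ℂ)) x = kummerMReal ν (2 * ν) x := by
    rw [← hb, ← kummerM_ofReal]
    push_cast [ν]
    rfl
  have hW (x : ℝ) (hx : 0 < x) :
      whittakerM μ x = (Real.exp (-x / 2) * x ^ ν * kummerMReal ν (2 * ν) x : ℝ) := by
    rw [whittakerM_ofReal μ hx, hb]
  have hexp (x : ℝ) (hx : 0 < x) : Real.exp (x / 2) < kummerMReal ν (2 * ν) x := by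
    have := exp_div_mul_lt_kummerMReal hν (by linarith : ν < 2 * ν) hx
    rwa [show ν / (2 * ν) * x = x / 2 by field_simp] at this
  refine ⟨fun x hx => ⟨?_, ?_, ?_, ?_⟩, fun x hx y hy hxy => ?_⟩
  · rw [hK x, Complex.ofReal_im]
  · rw [hK x, Complex.ofReal_re]
    exact (hexp x hx).le
  · rw [hW x hx, Complex.ofReal_im]
  · rw [hW x hx, Complex.ofReal_re]
    have hpos : 0 < x ^ ν := Real.rpow_pos_of_pos hx ν
    have hone : 1 < Real.exp (-x / 2) * kummerMReal ν (2 * ν) x := by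
      rw [← div_lt_iff₀' (Real.exp_pos _), one_div, ← Real.exp_neg, neg_div, neg_neg]
      exact hexp x hx
    nlinarith
  · simp only [hW x hx, hW y hy, Complex.ofReal_re]
    exact strictMonoOn_exp_mul_rpow_mul_kummerMReal hν hx hy hxy

/-- For `0 ≤ μ < 1/2` and `x > 0`: `M(1/2+μ, 1+2μ, x) ≥ e^{x/2}` (the value is real),
`M_{0,μ}(x) > x^{1/2+μ}` (the value is real), and `x ↦ M_{0,μ}(x)` is monotone increasing
on `(0,∞)`. -/
theorem stmt0 (μ : ℝ) (hμ0 : 0 ≤ μ) (hμ : μ < 1 / 2) :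
    (∀ x : ℝ, 0 < x →
      (kummerM (1 / 2 + (μ : ℂ)) (1 + 2 * (μ : ℂ)) (x : ℂ)).im = 0 ∧
      Real.exp (x / 2) ≤ (kummerM (1 / 2 + (μ : ℂ)) (1 + 2 * (μ : ℂ)) (x : ℂ)).re ∧
      (whittakerM (μ : ℂ) (x : ℂ)).im = 0 ∧
      x ^ ((1 : ℝ) / 2 + μ) < (whittakerM (μ : ℂ) (x : ℂ)).re) ∧
    StrictMonoOn (fun x : ℝ => (whittakerM (μ : ℂ) (x : ℂ)).re) (Set.Ioi 0) :=
  stmt0_general μ hμ0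
end

section
/- Assume β² < 1/4, let m ≥ 1 be an integer, y₀ ≤ 0 and ε ∈ (0,1]. Let φ : [0,1] → ℂ be C² with φ(0) = φ(1) = 0 and φ''(y) − m²φ(y) + β²φ(y)/(y−y₀+iε)² = F(y) on (0,1), with F continuous. Then (1−4β²)·‖φ'‖²_{L²(0,1)} + m²·‖φ‖²_{L²(0,1)} ≤ C·m^{−2}·‖F‖²_{L²(0,1)} for a constant C depending only on β, and moreover 0 ≤ ∫₀¹ ε(y−y₀)/((y−y₀)²+ε²)² · |φ(y)|² dy ≤ 2·‖φ‖_{L²(0,1)}·‖F‖_{L²(0,1)}. -/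
/-!
Multiplying the equation by `conj φ` and integrating by parts gives
`∫ F φ̄ = -‖φ'‖² - m² ‖φ‖² + β² ∫ |φ|² / (y - y₀ + iε)²`.
For `y₀ ≤ 0` the real part of `(y - y₀ + iε)⁻²` is at most `1 / y² - 3 w²`, where
`w = ε / ((y - y₀)² + ε²)`, so Hardy's inequality `∫ |φ|² / y² ≤ 4 ‖φ'‖²` gives
`(1 - 4β²) ‖φ'‖² + m² ‖φ‖² + 3β² ‖wφ‖² ≤ -Re ∫ F φ̄ ≤ ‖φ‖ ‖F‖`; since `m² ‖φ‖²` is one of the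
terms on the left, this is the first estimate.
The imaginary part is `-2β² T`, where `T` is the weighted integral of the second estimate and
`-w' / 2` is its weight. Integrating by parts against `w` gives `T ≤ ‖wφ‖ ‖φ'‖`, and Hardy again
gives `‖wφ‖ ≤ ‖φ'‖`. Playing the real part off against the imaginary one then yields
`T ≤ 2 |∫ F φ̄|`, with no dependence on `β`.
-/

open MeasureTheory Set Filter Topology
open scoped ComplexConjugate RealInnerProductSpace

section Calculus

variable {E : Type*} [NormedAddCommGroup E]

theorem integrableOn_Ioo_of_continuousOn_Icc {f : ℝ → E} {a b : ℝ}
    (hf : ContinuousOn f (Icc a b)) : IntegrableOn f (Ioo a b) :=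
  hf.integrableOn_Icc.mono_set Ioo_subset_Icc_self

theorem integrableOn_Ioo_of_continuousOn_of_norm_le {f : ℝ → E} {a b M : ℝ}
    (hf : ContinuousOn f (Ioo a b)) (hM : ∀ y ∈ Ioo a b, ‖f y‖ ≤ M) :
    IntegrableOn f (Ioo a b) :=
  Integrable.of_bound (hf.aestronglyMeasurable measurableSet_Ioo) M
    ((ae_restrict_iff' measurableSet_Ioo).2 (Eventually.of_forall hM))

theorem integral_Ioo_eq_sub_of_hasDerivAt [NormedSpace ℝ E] [CompleteSpace E] {f f' : ℝ → E}
    {a b : ℝ} (hab : a ≤ b) (hf : ContinuousOn f (Icc a b))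
    (hd : ∀ y ∈ Ioo a b, HasDerivAt f (f' y) y) (hf' : IntegrableOn f' (Ioo a b)) :
    ∫ y in Ioo a b, f' y = f b - f a := by
  rw [← integral_Ioc_eq_integral_Ioo, ← intervalIntegral.integral_of_le hab]
  exact intervalIntegral.integral_eq_sub_of_hasDerivAt_of_le hab hf hd
    ((intervalIntegrable_iff_integrableOn_Ioo_of_le hab).2 hf')

theorem continuousOn_norm_sq_div {φ : ℝ → E} {M : ℝ} (hφ : ContinuousOn φ (Icc 0 1))
    (hM : ∀ y ∈ Icc (0 : ℝ) 1, ‖φ y‖ ≤ M * y) :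
    ContinuousOn (fun y => ‖φ y‖ ^ 2 / y) (Icc 0 1) := by
  intro y hy
  rcases hy.1.eq_or_lt with rfl | hy0
  · -- at `0` the function is `0 / 0 = 0`, and it is squeezed by `M² y`
    have hlin : Tendsto (fun t : ℝ => M ^ 2 * t) (𝓝[Icc 0 1] 0) (𝓝 0) :=
      ((continuous_const_mul (M ^ 2)).tendsto' 0 0 (mul_zero _)).mono_left nhdsWithin_le_nhds
    have hlim : Tendsto (fun y => ‖φ y‖ ^ 2 / y) (𝓝[Icc 0 1] 0) (𝓝 0) := by
      refine squeeze_zero_norm' (eventually_nhdsWithin_of_forall fun t ht => ?_) hlin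
      rcases ht.1.eq_or_lt with rfl | ht0
      · simp
      · rw [Real.norm_of_nonneg (by positivity), div_le_iff₀ ht0]
        nlinarith [pow_le_pow_left₀ (norm_nonneg _) (hM t ht) 2]
    simpa [ContinuousWithinAt] using hlim
  · exact (((continuous_norm.comp_continuousOn hφ).pow 2) y hy).div continuousWithinAt_id
      hy0.ne'

end Calculus

theorem integral_mul_le_sqrt_mul_sqrt {α : Type*} [MeasurableSpace α] {μ : Measure α}
    {f g : α → ℝ} (hf : Integrable (fun x => f x ^ 2) μ) (hg : Integrable (fun x => g x ^ 2) μ)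
    (hfg : Integrable (fun x => f x * g x) μ) :
    ∫ x, f x * g x ∂μ ≤ √(∫ x, f x ^ 2 ∂μ) * √(∫ x, g x ^ 2 ∂μ) := by
  have hquad : ∀ t : ℝ, 0 ≤ (∫ x, f x ^ 2 ∂μ) * (t * t) + 2 * (∫ x, f x * g x ∂μ) * t
      + ∫ x, g x ^ 2 ∂μ := by
    intro t
    have hexpand : (fun x => (t * f x + g x) ^ 2)
        = fun x => t * t * f x ^ 2 + 2 * t * (f x * g x) + g x ^ 2 := by
      funext x; ring
    have hnonneg : 0 ≤ ∫ x, (t * f x + g x) ^ 2 ∂μ := integral_nonneg fun x => sq_nonneg _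
    have hsum : Integrable (fun x => t * t * f x ^ 2 + 2 * t * (f x * g x)) μ :=
      (hf.const_mul _).add (hfg.const_mul _)
    rw [hexpand, integral_add hsum hg,
      integral_add (hf.const_mul _) (hfg.const_mul _), integral_const_mul,
      integral_const_mul] at hnonneg
    linarith
  have hdisc := discrim_le_zero hquad
  rw [discrim] at hdisc
  calc ∫ x, f x * g x ∂μ ≤ |∫ x, f x * g x ∂μ| := le_abs_self _
    _ ≤ √((∫ x, f x ^ 2 ∂μ) * ∫ x, g x ^ 2 ∂μ) := Real.abs_le_sqrt (by linarith)
    _ = _ := Real.sqrt_mul (integral_nonneg fun x => sq_nonneg _) _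

section InnerProductSpace

variable {E : Type*} [NormedAddCommGroup E] [InnerProductSpace ℝ E] {φ φ' : ℝ → E}

theorem integral_neg_deriv_mul_norm_sq {w w' : ℝ → ℝ} (hw : ContinuousOn w (Icc 0 1))
    (hw' : ContinuousOn w' (Icc 0 1)) (hdw : ∀ y ∈ Ioo 0 1, HasDerivAt w (w' y) y)
    (hφ : ContinuousOn φ (Icc 0 1)) (hφ' : ContinuousOn φ' (Icc 0 1))
    (hd : ∀ y ∈ Ioo 0 1, HasDerivAt φ (φ' y) y) (h0 : φ 0 = 0) (h1 : φ 1 = 0) :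
    ∫ y in Ioo 0 1, -w' y * ‖φ y‖ ^ 2 = ∫ y in Ioo 0 1, w y * (2 * ⟪φ y, φ' y⟫) := by
  have hnφ : ContinuousOn (fun y => ‖φ y‖ ^ 2) (Icc 0 1) :=
    (continuous_norm.comp_continuousOn hφ).pow 2
  have hw'φ : IntegrableOn (fun y => w' y * ‖φ y‖ ^ 2) (Ioo 0 1) :=
    integrableOn_Ioo_of_continuousOn_Icc (hw'.mul hnφ)
  have hwφ : IntegrableOn (fun y => w y * (2 * ⟪φ y, φ' y⟫)) (Ioo 0 1) :=
    integrableOn_Ioo_of_continuousOn_Icc (hw.mul (continuousOn_const.mul (hφ.inner hφ')))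
  have hibp := integral_Ioo_eq_sub_of_hasDerivAt (f := fun y => w y * ‖φ y‖ ^ 2)
    (f' := fun y => w' y * ‖φ y‖ ^ 2 + w y * (2 * ⟪φ y, φ' y⟫)) zero_le_one
    (hw.mul hnφ) (fun y hy => (hdw y hy).mul (hd y hy).norm_sq) (hw'φ.add hwφ)
  rw [integral_add hw'φ hwφ] at hibp
  simp only [neg_mul, integral_neg]
  simp [h0, h1] at hibp
  linarith

theorem integral_neg_deriv_mul_norm_sq_le {w w' : ℝ → ℝ} (hw : ContinuousOn w (Icc 0 1))
    (hw' : ContinuousOn w' (Icc 0 1)) (hdw : ∀ y ∈ Ioo 0 1, HasDerivAt w (w' y) y)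
    (hφ : ContinuousOn φ (Icc 0 1)) (hφ' : ContinuousOn φ' (Icc 0 1))
    (hd : ∀ y ∈ Ioo 0 1, HasDerivAt φ (φ' y) y) (h0 : φ 0 = 0) (h1 : φ 1 = 0) :
    ∫ y in Ioo 0 1, -w' y * ‖φ y‖ ^ 2 ≤
      2 * (√(∫ y in Ioo 0 1, (w y * ‖φ y‖) ^ 2) * √(∫ y in Ioo 0 1, ‖φ' y‖ ^ 2)) := by
  have hnφ : ContinuousOn (fun y => ‖φ y‖) (Icc 0 1) := continuous_norm.comp_continuousOn hφ
  have hnφ' : ContinuousOn (fun y => ‖φ' y‖) (Icc 0 1) := continuous_norm.comp_continuousOn hφ'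
  have hwφ : ContinuousOn (fun y => |w y| * ‖φ y‖) (Icc 0 1) :=
    (continuous_abs.comp_continuousOn hw).mul hnφ
  have habs : IntegrableOn (fun y => |w y| * ‖φ y‖ * ‖φ' y‖) (Ioo 0 1) :=
    integrableOn_Ioo_of_continuousOn_Icc (hwφ.mul hnφ')
  calc ∫ y in Ioo 0 1, -w' y * ‖φ y‖ ^ 2 = ∫ y in Ioo 0 1, w y * (2 * ⟪φ y, φ' y⟫) :=
        integral_neg_deriv_mul_norm_sq hw hw' hdw hφ hφ' hd h0 h1
    _ ≤ ∫ y in Ioo 0 1, 2 * (|w y| * ‖φ y‖ * ‖φ' y‖) :=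
        setIntegral_mono_on (integrableOn_Ioo_of_continuousOn_Icc
          (hw.mul (continuousOn_const.mul (hφ.inner hφ')))) (habs.const_mul 2)
          measurableSet_Ioo fun y _ => by
          have hCS := mul_le_mul_of_nonneg_left (abs_real_inner_le_norm (φ y) (φ' y))
            (abs_nonneg (w y))
          have habs_mul : w y * ⟪φ y, φ' y⟫ ≤ |w y| * |⟪φ y, φ' y⟫| := by
            rw [← abs_mul]; exact le_abs_self _
          linarith
    _ = 2 * ∫ y in Ioo 0 1, |w y| * ‖φ y‖ * ‖φ' y‖ := integral_const_mul _ _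
    _ ≤ 2 * (√(∫ y in Ioo 0 1, (w y * ‖φ y‖) ^ 2) * √(∫ y in Ioo 0 1, ‖φ' y‖ ^ 2)) := by
        gcongr
        simp only [← sq_abs (w _ * _), abs_mul, abs_norm]
        exact integral_mul_le_sqrt_mul_sqrt (integrableOn_Ioo_of_continuousOn_Icc (hwφ.pow 2))
          (integrableOn_Ioo_of_continuousOn_Icc (hnφ'.pow 2)) habs

variable [CompleteSpace E]

theorem exists_norm_le_mul_of_hasDerivAt (hφ : ContinuousOn φ (Icc 0 1))
    (hφ' : ContinuousOn φ' (Icc 0 1)) (hd : ∀ y ∈ Ioo 0 1, HasDerivAt φ (φ' y) y)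
    (h0 : φ 0 = 0) : ∃ M, ∀ y ∈ Icc (0 : ℝ) 1, ‖φ' y‖ ≤ M ∧ ‖φ y‖ ≤ M * y := by
  obtain ⟨M, hM⟩ := isCompact_Icc.exists_bound_of_continuousOn hφ'
  refine ⟨M, fun y hy => ⟨hM y hy, ?_⟩⟩
  have hsub : Icc 0 y ⊆ Icc (0 : ℝ) 1 := Icc_subset_Icc le_rfl hy.2
  have hftc : ∫ t in (0 : ℝ)..y, φ' t = φ y := by
    rw [intervalIntegral.integral_eq_sub_of_hasDerivAt_of_le hy.1 (hφ.mono hsub)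
      (fun t ht => hd t ⟨ht.1, ht.2.trans_le hy.2⟩)
      ((hφ'.mono hsub).intervalIntegrable_of_Icc hy.1), h0, sub_zero]
  calc ‖φ y‖ = ‖∫ t in (0 : ℝ)..y, φ' t‖ := by rw [hftc]
    _ ≤ M * |y - 0| := intervalIntegral.norm_integral_le_of_norm_le_const fun t ht =>
        hM t (hsub (Ioc_subset_Icc_self (uIoc_of_le hy.1 ▸ ht)))
    _ = M * y := by rw [sub_zero, abs_of_nonneg hy.1]

theorem integrableOn_norm_sq_div_sq (hφ : ContinuousOn φ (Icc 0 1))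
    (hφ' : ContinuousOn φ' (Icc 0 1)) (hd : ∀ y ∈ Ioo 0 1, HasDerivAt φ (φ' y) y)
    (h0 : φ 0 = 0) : IntegrableOn (fun y => ‖φ y‖ ^ 2 / y ^ 2) (Ioo 0 1) := by
  obtain ⟨M, hM⟩ := exists_norm_le_mul_of_hasDerivAt hφ hφ' hd h0
  refine integrableOn_Ioo_of_continuousOn_of_norm_le (M := M ^ 2) ?_ fun y hy => ?_
  · exact ((continuous_norm.comp_continuousOn (hφ.mono Ioo_subset_Icc_self)).pow 2).div
      (continuousOn_id.pow 2) fun y hy => pow_ne_zero 2 hy.1.ne'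
  · rw [Real.norm_of_nonneg (by positivity), div_le_iff₀ (pow_pos hy.1 2), ← mul_pow]
    exact pow_le_pow_left₀ (norm_nonneg _) (hM y (Ioo_subset_Icc_self hy)).2 2

theorem integrableOn_norm_div_mul_norm (hφ : ContinuousOn φ (Icc 0 1))
    (hφ' : ContinuousOn φ' (Icc 0 1)) (hd : ∀ y ∈ Ioo 0 1, HasDerivAt φ (φ' y) y)
    (h0 : φ 0 = 0) : IntegrableOn (fun y => ‖φ y‖ / y * ‖φ' y‖) (Ioo 0 1) := by
  obtain ⟨M, hM⟩ := exists_norm_le_mul_of_hasDerivAt hφ hφ' hd h0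
  refine integrableOn_Ioo_of_continuousOn_of_norm_le (M := M * M) ?_ fun y hy => ?_
  · exact ((continuous_norm.comp_continuousOn (hφ.mono Ioo_subset_Icc_self)).div continuousOn_id
      fun y hy => hy.1.ne').mul (continuous_norm.comp_continuousOn (hφ'.mono Ioo_subset_Icc_self))
  · obtain ⟨hφ'y, hφy⟩ := hM y (Ioo_subset_Icc_self hy)
    rw [Real.norm_of_nonneg (mul_nonneg (div_nonneg (norm_nonneg _) hy.1.le) (norm_nonneg _))]
    exact mul_le_mul ((div_le_iff₀ hy.1).2 hφy) hφ'y (norm_nonneg _)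
      ((norm_nonneg _).trans hφ'y)

theorem integral_norm_sq_div_sq_le_two_mul (hφ : ContinuousOn φ (Icc 0 1))
    (hφ' : ContinuousOn φ' (Icc 0 1)) (hd : ∀ y ∈ Ioo 0 1, HasDerivAt φ (φ' y) y)
    (h0 : φ 0 = 0) :
    ∫ y in Ioo 0 1, ‖φ y‖ ^ 2 / y ^ 2 ≤ 2 * ∫ y in Ioo 0 1, ‖φ y‖ / y * ‖φ' y‖ := by
  obtain ⟨M, hM⟩ := exists_norm_le_mul_of_hasDerivAt hφ hφ' hd h0
  set g : ℝ → ℝ := fun y => ‖φ y‖ ^ 2 / y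
  have hg : ContinuousOn g (Icc 0 1) := continuousOn_norm_sq_div hφ fun y hy => (hM y hy).2
  have hg' : ∀ y ∈ Ioo (0 : ℝ) 1,
      HasDerivAt g (2 * ⟪φ y, φ' y⟫ / y - ‖φ y‖ ^ 2 / y ^ 2) y := fun y hy =>
    ((hd y hy).norm_sq.div (hasDerivAt_id y) hy.1.ne').congr_deriv (by simp only [id]; field_simp)
  have hinner : IntegrableOn (fun y => 2 * ⟪φ y, φ' y⟫ / y) (Ioo 0 1) := by
    refine integrableOn_Ioo_of_continuousOn_of_norm_le (M := 2 * (M * M)) ?_ fun y hy => ?_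
    · exact (continuousOn_const.mul ((hφ.mono Ioo_subset_Icc_self).inner
        (hφ'.mono Ioo_subset_Icc_self))).div continuousOn_id fun y hy => hy.1.ne'
    · obtain ⟨hφ'y, hφy⟩ := hM y (Ioo_subset_Icc_self hy)
      rw [norm_div, norm_mul, Real.norm_of_nonneg hy.1.le, Real.norm_two, Real.norm_eq_abs,
        div_le_iff₀ hy.1]
      nlinarith [abs_real_inner_le_norm (φ y) (φ' y), norm_nonneg (φ y), norm_nonneg (φ' y),
        mul_le_mul hφy hφ'y (norm_nonneg _) (mul_nonneg ((norm_nonneg _).trans hφ'y) hy.1.le)]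
  have hH := integrableOn_norm_sq_div_sq hφ hφ' hd h0
  have hftc := integral_Ioo_eq_sub_of_hasDerivAt zero_le_one hg hg' (hinner.sub hH)
  rw [integral_sub hinner hH] at hftc
  have hinner_le : ∫ y in Ioo 0 1, 2 * ⟪φ y, φ' y⟫ / y
      ≤ 2 * ∫ y in Ioo 0 1, ‖φ y‖ / y * ‖φ' y‖ := by
    rw [← integral_const_mul]
    refine setIntegral_mono_on hinner
      ((integrableOn_norm_div_mul_norm hφ hφ' hd h0).const_mul 2) measurableSet_Ioo
      fun y hy => ?_
    rw [mul_div_assoc, div_mul_eq_mul_div]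
    exact mul_le_mul_of_nonneg_left
      (div_le_div_of_nonneg_right (real_inner_le_norm _ _) hy.1.le) two_pos.le
  have hg1 : 0 ≤ g 1 - g 0 := by simp [g]
  linarith

theorem integral_norm_sq_div_sq_le (hφ : ContinuousOn φ (Icc 0 1))
    (hφ' : ContinuousOn φ' (Icc 0 1)) (hd : ∀ y ∈ Ioo 0 1, HasDerivAt φ (φ' y) y)
    (h0 : φ 0 = 0) :
    ∫ y in Ioo 0 1, ‖φ y‖ ^ 2 / y ^ 2 ≤ 4 * ∫ y in Ioo 0 1, ‖φ' y‖ ^ 2 := by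
  set H := ∫ y in Ioo 0 1, ‖φ y‖ ^ 2 / y ^ 2
  set A := ∫ y in Ioo 0 1, ‖φ' y‖ ^ 2
  have hcs : ∫ y in Ioo 0 1, ‖φ y‖ / y * ‖φ' y‖ ≤ √H * √A := by
    simp only [H, ← div_pow]
    exact integral_mul_le_sqrt_mul_sqrt
      ((integrableOn_norm_sq_div_sq hφ hφ' hd h0).congr_fun (fun y _ => (div_pow _ _ _).symm)
        measurableSet_Ioo)
      (integrableOn_Ioo_of_continuousOn_Icc ((continuous_norm.comp_continuousOn hφ').pow 2))
      (integrableOn_norm_div_mul_norm hφ hφ' hd h0)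
  have hH : H ≤ 2 * (√H * √A) :=
    (integral_norm_sq_div_sq_le_two_mul hφ hφ' hd h0).trans (by gcongr)
  have hH0 : 0 ≤ H := setIntegral_nonneg measurableSet_Ioo fun y _ => by positivity
  have hA0 : 0 ≤ A := setIntegral_nonneg measurableSet_Ioo fun y _ => by positivity
  -- with `u = √H`, `v = √A`: `u² ≤ 2uv` and `(2v - u)² ≥ 0` give `u² ≤ 4v²`
  nlinarith [Real.sq_sqrt hH0, Real.sq_sqrt hA0, sq_nonneg (2 * √A - √H)]

end InnerProductSpace

section Complex

variable {φ φ' φ'' : ℝ → ℂ}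

theorem integral_mul_conj_eq_neg_integral_norm_sq (hφ : ContinuousOn φ (Icc 0 1))
    (hφ' : ContinuousOn φ' (Icc 0 1)) (hφ'' : ContinuousOn φ'' (Icc 0 1))
    (hd : ∀ y ∈ Ioo 0 1, HasDerivAt φ (φ' y) y) (hd' : ∀ y ∈ Ioo 0 1, HasDerivAt φ' (φ'' y) y)
    (h0 : φ 0 = 0) (h1 : φ 1 = 0) :
    ∫ y in Ioo (0 : ℝ) 1, φ'' y * conj (φ y) = -((∫ y in Ioo (0 : ℝ) 1, ‖φ' y‖ ^ 2 : ℝ) : ℂ) := by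
  have hconj : ∀ {f : ℝ → ℂ}, ContinuousOn f (Icc 0 1) →
      ContinuousOn (fun y => conj (f y)) (Icc 0 1) :=
    fun hf => Complex.continuous_conj.comp_continuousOn hf
  have hφ''φ : IntegrableOn (fun y => φ'' y * conj (φ y)) (Ioo 0 1) :=
    integrableOn_Ioo_of_continuousOn_Icc (hφ''.mul (hconj hφ))
  have hφ'φ' : IntegrableOn (fun y => φ' y * conj (φ' y)) (Ioo 0 1) :=
    integrableOn_Ioo_of_continuousOn_Icc (hφ'.mul (hconj hφ'))
  have hftc := integral_Ioo_eq_sub_of_hasDerivAt (f := fun y => φ' y * conj (φ y))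
    (f' := fun y => φ'' y * conj (φ y) + φ' y * conj (φ' y)) zero_le_one
    (hφ'.mul (hconj hφ)) (fun y hy => (hd' y hy).mul (hd y hy).star) (hφ''φ.add hφ'φ')
  rw [integral_add hφ''φ hφ'φ', h0, h1] at hftc
  simp only [Complex.mul_conj', ← Complex.ofReal_pow] at hftc
  rw [integral_complex_ofReal] at hftc
  simp only [map_zero, mul_zero, sub_zero] at hftc
  linear_combination hftc

theorem integral_mul_conj_eq {F z : ℝ → ℂ} {c d : ℂ} (hφ : ContinuousOn φ (Icc 0 1))
    (hφ' : ContinuousOn φ' (Icc 0 1)) (hφ'' : ContinuousOn φ'' (Icc 0 1))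
    (hz : ContinuousOn z (Icc 0 1)) (hz0 : ∀ y ∈ Icc (0 : ℝ) 1, z y ≠ 0)
    (hd : ∀ y ∈ Ioo 0 1, HasDerivAt φ (φ' y) y) (hd' : ∀ y ∈ Ioo 0 1, HasDerivAt φ' (φ'' y) y)
    (h0 : φ 0 = 0) (h1 : φ 1 = 0)
    (heq : ∀ y ∈ Ioo (0 : ℝ) 1, φ'' y - c * φ y + d * φ y / z y ^ 2 = F y) :
    ∫ y in Ioo (0 : ℝ) 1, F y * conj (φ y) =
      -((∫ y in Ioo (0 : ℝ) 1, ‖φ' y‖ ^ 2 : ℝ) : ℂ)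
        - c * ((∫ y in Ioo (0 : ℝ) 1, ‖φ y‖ ^ 2 : ℝ) : ℂ)
        + d * ∫ y in Ioo (0 : ℝ) 1, ((‖φ y‖ ^ 2 : ℝ) : ℂ) / z y ^ 2 := by
  have hnφ : ContinuousOn (fun y => ((‖φ y‖ ^ 2 : ℝ) : ℂ)) (Icc 0 1) :=
    Complex.continuous_ofReal.comp_continuousOn ((continuous_norm.comp_continuousOn hφ).pow 2)
  have hφ''φ : IntegrableOn (fun y => φ'' y * conj (φ y)) (Ioo 0 1) :=
    integrableOn_Ioo_of_continuousOn_Icc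
      (hφ''.mul (Complex.continuous_conj.comp_continuousOn hφ))
  have hN : IntegrableOn (fun y => c * ((‖φ y‖ ^ 2 : ℝ) : ℂ)) (Ioo 0 1) :=
    integrableOn_Ioo_of_continuousOn_Icc (continuousOn_const.mul hnφ)
  have hK : IntegrableOn (fun y => ((‖φ y‖ ^ 2 : ℝ) : ℂ) / z y ^ 2) (Ioo 0 1) :=
    integrableOn_Ioo_of_continuousOn_Icc
      (hnφ.div (hz.pow 2) fun y hy => pow_ne_zero 2 (hz0 y hy))
  have hpt : ∀ y ∈ Ioo (0 : ℝ) 1, F y * conj (φ y) = φ'' y * conj (φ y)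
      - c * ((‖φ y‖ ^ 2 : ℝ) : ℂ) + d * (((‖φ y‖ ^ 2 : ℝ) : ℂ) / z y ^ 2) := by
    intro y hy
    rw [← heq y hy, Complex.ofReal_pow, ← Complex.mul_conj']
    ring
  have hsub : IntegrableOn (fun y => φ'' y * conj (φ y) - c * ((‖φ y‖ ^ 2 : ℝ) : ℂ))
      (Ioo 0 1) := hφ''φ.sub hN
  rw [setIntegral_congr_fun measurableSet_Ioo hpt, integral_add hsub (hK.const_mul d),
    integral_sub hφ''φ hN, integral_const_mul, integral_const_mul,
    integral_mul_conj_eq_neg_integral_norm_sq hφ hφ' hφ'' hd hd' h0 h1,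
    integral_complex_ofReal]

theorem norm_integral_mul_conj_le {f g : ℝ → ℂ} (hf : ContinuousOn f (Icc 0 1))
    (hg : ContinuousOn g (Icc 0 1)) :
    ‖∫ y in Ioo (0 : ℝ) 1, f y * conj (g y)‖ ≤
      √(∫ y in Ioo (0 : ℝ) 1, ‖g y‖ ^ 2) * √(∫ y in Ioo (0 : ℝ) 1, ‖f y‖ ^ 2) := by
  have hnf := continuous_norm.comp_continuousOn hf
  have hng := continuous_norm.comp_continuousOn hg
  calc ‖∫ y in Ioo (0 : ℝ) 1, f y * conj (g y)‖
      ≤ ∫ y in Ioo (0 : ℝ) 1, ‖f y * conj (g y)‖ := norm_integral_le_integral_norm _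
    _ = ∫ y in Ioo (0 : ℝ) 1, ‖g y‖ * ‖f y‖ := by simp only [norm_mul, Complex.norm_conj, mul_comm]
    _ ≤ _ := integral_mul_le_sqrt_mul_sqrt
        (integrableOn_Ioo_of_continuousOn_Icc (hng.pow 2))
        (integrableOn_Ioo_of_continuousOn_Icc (hnf.pow 2))
        (integrableOn_Ioo_of_continuousOn_Icc (hng.mul hnf))

theorem Complex.sq_add_mul_I_eq (a e : ℝ) :
    ((a : ℂ) + e * I) ^ 2 = ((a ^ 2 - e ^ 2 : ℝ) : ℂ) + ((2 * a * e : ℝ) : ℂ) * I := by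
  push_cast
  ring_nf
  rw [I_sq]
  ring

theorem Complex.re_ofReal_div_sq_add_mul_I (r a e : ℝ) :
    ((r : ℂ) / ((a : ℂ) + e * I) ^ 2).re = r * ((a ^ 2 - e ^ 2) / (a ^ 2 + e ^ 2) ^ 2) := by
  rw [sq_add_mul_I_eq, div_re, normSq_add_mul_I]
  simp only [add_re, add_im, ofReal_re, ofReal_im, mul_re, mul_im, I_re, I_im]
  ring

theorem Complex.im_ofReal_div_sq_add_mul_I (r a e : ℝ) :
    ((r : ℂ) / ((a : ℂ) + e * I) ^ 2).im = -2 * (e * a / (a ^ 2 + e ^ 2) ^ 2 * r) := by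
  rw [sq_add_mul_I_eq, div_im, normSq_add_mul_I]
  simp only [add_re, add_im, ofReal_re, ofReal_im, mul_re, mul_im, I_re, I_im]
  ring

end Complex

theorem sub_div_sq_add_three_mul_sq_le {a e y : ℝ} (hy : 0 < y) (hya : y ≤ a) :
    (a ^ 2 - e ^ 2) / (a ^ 2 + e ^ 2) ^ 2 + 3 * (e / (a ^ 2 + e ^ 2)) ^ 2 ≤ 1 / y ^ 2 := by
  have ha : 0 < a := hy.trans_le hya
  have hy2 : y ^ 2 ≤ a ^ 2 := pow_le_pow_left₀ hy.le hya 2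
  rw [div_pow, mul_div_assoc', ← add_div, div_le_div_iff₀ (by positivity) (by positivity)]
  nlinarith [mul_le_mul_of_nonneg_left hy2 (by positivity : (0 : ℝ) ≤ a ^ 2 + 2 * e ^ 2),
    pow_nonneg (sq_nonneg e) 2]

theorem div_sq_add_sq_sq_le {a e y : ℝ} (hy : 0 < y) (hya : y ≤ a) :
    (e / (a ^ 2 + e ^ 2)) ^ 2 ≤ 1 / 4 * (1 / y ^ 2) := by
  have ha : 0 < a := hy.trans_le hya
  have hy2 : y ^ 2 ≤ a ^ 2 := pow_le_pow_left₀ hy.le hya 2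
  rw [div_pow, one_div_mul_one_div, div_le_div_iff₀ (by positivity) (by positivity)]
  nlinarith [mul_le_mul_of_nonneg_left hy2 (by positivity : (0 : ℝ) ≤ 4 * e ^ 2),
    sq_nonneg (a ^ 2 - e ^ 2)]

theorem add_mul_le_inv_mul_of_le_sqrt_mul_sqrt {a k B G : ℝ} (ha : 0 ≤ a) (hk : 0 < k)
    (hB : 0 ≤ B) (hG : 0 ≤ G) (h : a + k * B ≤ √B * √G) : a + k * B ≤ k⁻¹ * G := by
  have hX : 0 ≤ a + k * B := by positivity
  have hsq : (a + k * B) ^ 2 ≤ B * G := by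
    calc (a + k * B) ^ 2 ≤ (√B * √G) ^ 2 := pow_le_pow_left₀ hX h 2
      _ = B * G := by rw [mul_pow, Real.sq_sqrt hB, Real.sq_sqrt hG]
  rw [inv_mul_eq_div, le_div_iff₀ hk]
  by_contra! hlt
  have hXpos : 0 < a + k * B := by nlinarith
  nlinarith [mul_le_mul_of_nonneg_right (by linarith : k * B ≤ a + k * B) hG,
    mul_lt_mul_of_pos_left hlt hXpos]

theorem le_two_mul_norm_of_neg_re_le {s A Q T : ℝ} {I : ℂ} (hs0 : 0 ≤ s) (hs : s ≤ 1 / 4)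
    (hQ : 0 ≤ Q) (hQA : Q ≤ A) (hT : T ≤ √Q * √A)
    (hre : (1 - 4 * s) * A + 3 * s * Q ≤ -I.re) (him : I.im = -2 * s * T) : T ≤ 2 * ‖I‖ := by
  rcases le_or_gt T 0 with hT0 | hT0
  · linarith [norm_nonneg I]
  have hTsq : T ^ 2 ≤ Q * A := by
    calc T ^ 2 ≤ (√Q * √A) ^ 2 := pow_le_pow_left₀ hT0.le hT 2
      _ = Q * A := by rw [mul_pow, Real.sq_sqrt hQ, Real.sq_sqrt (hQ.trans hQA)]
  set P := (1 - 4 * s) * A + 3 * s * Q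
  have hPQ : (1 - s) * Q ≤ P := by nlinarith
  have hPA : (1 - 4 * s) * A ≤ P := by nlinarith
  -- `4 P² ≥ 4 (1 - s) Q · (1 - 4s) A` and `4 (1 - s) ≥ 1 + 4s`
  have hP : (1 - 16 * s ^ 2) * (Q * A) ≤ 4 * P ^ 2 := by
    nlinarith [mul_le_mul hPQ hPA (by nlinarith) (by nlinarith), mul_nonneg hQ (hQ.trans hQA)]
  have hP0 : 0 ≤ P := le_trans (by nlinarith) hPQ
  have hre2 : P ^ 2 ≤ I.re ^ 2 := by nlinarith
  have hTP : (1 - 16 * s ^ 2) * T ^ 2 ≤ (1 - 16 * s ^ 2) * (Q * A) :=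
    mul_le_mul_of_nonneg_left hTsq (by nlinarith)
  have hTI : T ^ 2 ≤ (2 * ‖I‖) ^ 2 := by
    rw [mul_pow, Complex.sq_norm, Complex.normSq_apply, him]
    nlinarith
  exact (pow_le_pow_iff_left₀ hT0.le (by positivity) two_ne_zero).1 hTI

section Weight

variable {y₀ ε : ℝ} {φ φ' : ℝ → ℂ}

theorem sub_add_mul_I_ne_zero (hε : ε ≠ 0) (y : ℝ) : (y : ℂ) - y₀ + ε * Complex.I ≠ 0 :=
  fun h => hε (by simpa using congrArg Complex.im h)

theorem integrableOn_norm_sq_div_sub_add_mul_I_sq (hε : ε ≠ 0) (hφ : ContinuousOn φ (Icc 0 1)) :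
    IntegrableOn (fun y : ℝ => ((‖φ y‖ ^ 2 : ℝ) : ℂ) / ((y : ℂ) - y₀ + ε * Complex.I) ^ 2)
      (Ioo 0 1) :=
  integrableOn_Ioo_of_continuousOn_Icc
    ((Complex.continuous_ofReal.comp_continuousOn
      ((continuous_norm.comp_continuousOn hφ).pow 2)).div
        (by fun_prop) fun y _ => pow_ne_zero 2 (sub_add_mul_I_ne_zero hε y))

theorem re_integral_norm_sq_div_sub_add_mul_I_sq (hε : ε ≠ 0) (hφ : ContinuousOn φ (Icc 0 1)) :
    (∫ y in Ioo (0 : ℝ) 1, ((‖φ y‖ ^ 2 : ℝ) : ℂ) / ((y : ℂ) - y₀ + ε * Complex.I) ^ 2).re =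
      ∫ y in Ioo (0 : ℝ) 1, ‖φ y‖ ^ 2 * (((y - y₀) ^ 2 - ε ^ 2) / ((y - y₀) ^ 2 + ε ^ 2) ^ 2) := by
  rw [← RCLike.re_to_complex, ← integral_re (integrableOn_norm_sq_div_sub_add_mul_I_sq hε hφ)]
  refine integral_congr_ae (Eventually.of_forall fun y => ?_)
  simp only [RCLike.re_to_complex]
  rw [show (y : ℂ) - y₀ = ((y - y₀ : ℝ) : ℂ) by push_cast; ring,
    Complex.re_ofReal_div_sq_add_mul_I]

theorem im_integral_norm_sq_div_sub_add_mul_I_sq (hε : ε ≠ 0) (hφ : ContinuousOn φ (Icc 0 1)) :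
    (∫ y in Ioo (0 : ℝ) 1, ((‖φ y‖ ^ 2 : ℝ) : ℂ) / ((y : ℂ) - y₀ + ε * Complex.I) ^ 2).im =
      -2 * ∫ y in Ioo (0 : ℝ) 1, ε * (y - y₀) / ((y - y₀) ^ 2 + ε ^ 2) ^ 2 * ‖φ y‖ ^ 2 := by
  rw [← RCLike.im_to_complex, ← integral_im (integrableOn_norm_sq_div_sub_add_mul_I_sq hε hφ),
    ← integral_const_mul]
  refine integral_congr_ae (Eventually.of_forall fun y => ?_)
  simp only [RCLike.im_to_complex]
  rw [show (y : ℂ) - y₀ = ((y - y₀ : ℝ) : ℂ) by push_cast; ring,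
    Complex.im_ofReal_div_sq_add_mul_I]

theorem continuous_div_sub_sq_add_sq (hε : ε ≠ 0) :
    Continuous fun y => ε / ((y - y₀) ^ 2 + ε ^ 2) :=
  continuous_const.div (by fun_prop) fun y => by positivity

theorem integral_norm_sq_mul_sub_sq_div_le (hy₀ : y₀ ≤ 0) (hε : ε ≠ 0)
    (hφ : ContinuousOn φ (Icc 0 1)) (hφ' : ContinuousOn φ' (Icc 0 1)) (hd : ∀ y ∈ Ioo 0 1, HasDerivAt φ (φ' y) y)
    (h0 : φ 0 = 0) :
    ∫ y in Ioo (0 : ℝ) 1, ‖φ y‖ ^ 2 * (((y - y₀) ^ 2 - ε ^ 2) / ((y - y₀) ^ 2 + ε ^ 2) ^ 2) ≤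
      4 * (∫ y in Ioo (0 : ℝ) 1, ‖φ' y‖ ^ 2)
        - 3 * ∫ y in Ioo (0 : ℝ) 1, (ε / ((y - y₀) ^ 2 + ε ^ 2) * ‖φ y‖) ^ 2 := by
  have hnφ : ContinuousOn (fun y => ‖φ y‖) (Icc 0 1) := continuous_norm.comp_continuousOn hφ
  have hR : IntegrableOn
      (fun y => ‖φ y‖ ^ 2 * (((y - y₀) ^ 2 - ε ^ 2) / ((y - y₀) ^ 2 + ε ^ 2) ^ 2)) (Ioo 0 1) :=
    integrableOn_Ioo_of_continuousOn_Icc ((hnφ.pow 2).mul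
      ((by fun_prop : Continuous fun y : ℝ => (y - y₀) ^ 2 - ε ^ 2).continuousOn.div
        (by fun_prop) fun y _ => by positivity))
  have hQ : IntegrableOn (fun y => (ε / ((y - y₀) ^ 2 + ε ^ 2) * ‖φ y‖) ^ 2) (Ioo 0 1) :=
    integrableOn_Ioo_of_continuousOn_Icc
      (((continuous_div_sub_sq_add_sq hε).continuousOn.mul hnφ).pow 2)
  have hH := integrableOn_norm_sq_div_sq hφ hφ' hd h0
  calc _ ≤ ∫ y in Ioo (0 : ℝ) 1,
        (‖φ y‖ ^ 2 / y ^ 2 - 3 * (ε / ((y - y₀) ^ 2 + ε ^ 2) * ‖φ y‖) ^ 2) :=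
        setIntegral_mono_on hR (hH.sub (hQ.const_mul 3)) measurableSet_Ioo fun y hy => by
          have := mul_le_mul_of_nonneg_left
            (sub_div_sq_add_three_mul_sq_le (a := y - y₀) (e := ε) hy.1 (by linarith [hy.1]))
            (sq_nonneg ‖φ y‖)
          rw [mul_pow]
          linear_combination this
    _ ≤ _ := by
        rw [integral_sub hH (hQ.const_mul 3), integral_const_mul]
        linarith [integral_norm_sq_div_sq_le hφ hφ' hd h0]

theorem integral_div_sq_add_sq_mul_norm_sq_le (hy₀ : y₀ ≤ 0) (hε : ε ≠ 0)
    (hφ : ContinuousOn φ (Icc 0 1)) (hφ' : ContinuousOn φ' (Icc 0 1))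
    (hd : ∀ y ∈ Ioo 0 1, HasDerivAt φ (φ' y) y) (h0 : φ 0 = 0) :
    ∫ y in Ioo (0 : ℝ) 1, (ε / ((y - y₀) ^ 2 + ε ^ 2) * ‖φ y‖) ^ 2 ≤
      ∫ y in Ioo (0 : ℝ) 1, ‖φ' y‖ ^ 2 := by
  have hH := integrableOn_norm_sq_div_sq hφ hφ' hd h0
  have hQ : IntegrableOn (fun y => (ε / ((y - y₀) ^ 2 + ε ^ 2) * ‖φ y‖) ^ 2) (Ioo 0 1) :=
    integrableOn_Ioo_of_continuousOn_Icc
      (((continuous_div_sub_sq_add_sq hε).continuousOn.mul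
        (continuous_norm.comp_continuousOn hφ)).pow 2)
  calc _ ≤ ∫ y in Ioo (0 : ℝ) 1, 1 / 4 * (‖φ y‖ ^ 2 / y ^ 2) :=
        setIntegral_mono_on hQ (hH.const_mul _) measurableSet_Ioo fun y hy => by
          have := mul_le_mul_of_nonneg_left
            (div_sq_add_sq_sq_le (a := y - y₀) (e := ε) hy.1 (by linarith [hy.1]))
            (sq_nonneg ‖φ y‖)
          rw [mul_pow]
          linear_combination this
    _ ≤ _ := by
        rw [integral_const_mul]
        linarith [integral_norm_sq_div_sq_le hφ hφ' hd h0]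

theorem integral_mul_sub_div_sq_mul_norm_sq_le (hε : ε ≠ 0) (hφ : ContinuousOn φ (Icc 0 1))
    (hφ' : ContinuousOn φ' (Icc 0 1)) (hd : ∀ y ∈ Ioo 0 1, HasDerivAt φ (φ' y) y)
    (h0 : φ 0 = 0) (h1 : φ 1 = 0) :
    ∫ y in Ioo (0 : ℝ) 1, ε * (y - y₀) / ((y - y₀) ^ 2 + ε ^ 2) ^ 2 * ‖φ y‖ ^ 2 ≤
      √(∫ y in Ioo (0 : ℝ) 1, (ε / ((y - y₀) ^ 2 + ε ^ 2) * ‖φ y‖) ^ 2) *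
        √(∫ y in Ioo (0 : ℝ) 1, ‖φ' y‖ ^ 2) := by
  have hpos : ∀ y : ℝ, 0 < (y - y₀) ^ 2 + ε ^ 2 := fun y => by positivity
  have hdw : ∀ y ∈ Ioo (0 : ℝ) 1, HasDerivAt (fun t => ε / ((t - y₀) ^ 2 + ε ^ 2))
      (-2 * (ε * (y - y₀) / ((y - y₀) ^ 2 + ε ^ 2) ^ 2)) y := fun y _ => by
    have hden : HasDerivAt (fun t => (t - y₀) ^ 2 + ε ^ 2) (2 * (y - y₀)) y := by
      simpa using (((hasDerivAt_id y).sub_const y₀).pow 2).add_const (ε ^ 2)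
    exact ((hasDerivAt_const y ε).div hden (hpos y).ne').congr_deriv (by ring)
  have h := integral_neg_deriv_mul_norm_sq_le
    (w' := fun y => -2 * (ε * (y - y₀) / ((y - y₀) ^ 2 + ε ^ 2) ^ 2))
    (continuous_div_sub_sq_add_sq hε).continuousOn
    (continuous_const.mul ((by fun_prop : Continuous fun y : ℝ => ε * (y - y₀)).div
      (by fun_prop) fun y => (pow_pos (hpos y) 2).ne')).continuousOn hdw hφ hφ' hd h0 h1
  have hT : ∫ y in Ioo (0 : ℝ) 1,
      -(-2 * (ε * (y - y₀) / ((y - y₀) ^ 2 + ε ^ 2) ^ 2)) * ‖φ y‖ ^ 2 =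
      2 * ∫ y in Ioo (0 : ℝ) 1, ε * (y - y₀) / ((y - y₀) ^ 2 + ε ^ 2) ^ 2 * ‖φ y‖ ^ 2 := by
    rw [← integral_const_mul]
    congr 1 with y
    ring
  linarith

variable {β : ℝ} {m : ℕ} {φ'' F : ℝ → ℂ}

theorem neg_re_integral_mul_conj_ge (hy₀ : y₀ ≤ 0) (hε : ε ≠ 0) (hφ : ContinuousOn φ (Icc 0 1))
    (hφ' : ContinuousOn φ' (Icc 0 1)) (hφ'' : ContinuousOn φ'' (Icc 0 1))
    (hd : ∀ y ∈ Ioo 0 1, HasDerivAt φ (φ' y) y) (hd' : ∀ y ∈ Ioo 0 1, HasDerivAt φ' (φ'' y) y)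
    (h0 : φ 0 = 0) (h1 : φ 1 = 0)
    (heq : ∀ y ∈ Ioo (0 : ℝ) 1, φ'' y - (m : ℂ) ^ 2 * φ y +
      (β : ℂ) ^ 2 * φ y / ((y : ℂ) - (y₀ : ℂ) + (ε : ℂ) * Complex.I) ^ 2 = F y) :
    (1 - 4 * β ^ 2) * (∫ y in Ioo (0 : ℝ) 1, ‖φ' y‖ ^ 2)
      + (m : ℝ) ^ 2 * (∫ y in Ioo (0 : ℝ) 1, ‖φ y‖ ^ 2)
      + 3 * β ^ 2 * ∫ y in Ioo (0 : ℝ) 1, (ε / ((y - y₀) ^ 2 + ε ^ 2) * ‖φ y‖) ^ 2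
      ≤ -(∫ y in Ioo (0 : ℝ) 1, F y * conj (φ y)).re := by
  have hρ := integral_norm_sq_mul_sub_sq_div_le hy₀ hε hφ hφ' hd h0
  rw [integral_mul_conj_eq hφ hφ' hφ'' (by fun_prop) (fun y _ => sub_add_mul_I_ne_zero hε y)
    hd hd' h0 h1 heq]
  simp only [← Complex.ofReal_pow, ← Complex.ofReal_natCast, Complex.add_re, Complex.sub_re,
    Complex.neg_re, Complex.ofReal_re, Complex.re_ofReal_mul,
    re_integral_norm_sq_div_sub_add_mul_I_sq hε hφ]
  nlinarith [mul_le_mul_of_nonneg_left hρ (sq_nonneg β)]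

theorem im_integral_mul_conj_eq (hε : ε ≠ 0) (hφ : ContinuousOn φ (Icc 0 1))
    (hφ' : ContinuousOn φ' (Icc 0 1)) (hφ'' : ContinuousOn φ'' (Icc 0 1))
    (hd : ∀ y ∈ Ioo 0 1, HasDerivAt φ (φ' y) y) (hd' : ∀ y ∈ Ioo 0 1, HasDerivAt φ' (φ'' y) y)
    (h0 : φ 0 = 0) (h1 : φ 1 = 0)
    (heq : ∀ y ∈ Ioo (0 : ℝ) 1, φ'' y - (m : ℂ) ^ 2 * φ y +
      (β : ℂ) ^ 2 * φ y / ((y : ℂ) - (y₀ : ℂ) + (ε : ℂ) * Complex.I) ^ 2 = F y) :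
    (∫ y in Ioo (0 : ℝ) 1, F y * conj (φ y)).im = -2 * β ^ 2 *
      ∫ y in Ioo (0 : ℝ) 1, ε * (y - y₀) / ((y - y₀) ^ 2 + ε ^ 2) ^ 2 * ‖φ y‖ ^ 2 := by
  rw [integral_mul_conj_eq hφ hφ' hφ'' (by fun_prop) (fun y _ => sub_add_mul_I_ne_zero hε y)
    hd hd' h0 h1 heq]
  simp only [← Complex.ofReal_pow, ← Complex.ofReal_natCast, Complex.add_im, Complex.sub_im,
    Complex.neg_im, Complex.ofReal_im, Complex.im_ofReal_mul,
    im_integral_norm_sq_div_sub_add_mul_I_sq hε hφ]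
  ring

end Weight

theorem stmt10_general (β : ℝ) (hβ : β ^ 2 < 1 / 4) :
    ∃ C > (0 : ℝ), ∀ m : ℕ, 1 ≤ m → ∀ y₀ : ℝ, y₀ ≤ 0 → ∀ ε : ℝ, 0 < ε → ε ≤ 1 →
      ∀ φ φ' φ'' F : ℝ → ℂ,
        ContinuousOn φ (Set.Icc 0 1) →
        ContinuousOn φ' (Set.Icc 0 1) →
        ContinuousOn φ'' (Set.Icc 0 1) →
        ContinuousOn F (Set.Icc 0 1) →
        (∀ y ∈ Set.Ioo (0 : ℝ) 1, HasDerivAt φ (φ' y) y) →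
        (∀ y ∈ Set.Ioo (0 : ℝ) 1, HasDerivAt φ' (φ'' y) y) →
        φ 0 = 0 → φ 1 = 0 →
        (∀ y ∈ Set.Ioo (0 : ℝ) 1,
          φ'' y - (m : ℂ) ^ 2 * φ y +
            (β : ℂ) ^ 2 * φ y / ((y : ℂ) - (y₀ : ℂ) + (ε : ℂ) * Complex.I) ^ 2 = F y) →
        ((1 - 4 * β ^ 2) * (∫ y in Set.Ioo (0 : ℝ) 1, ‖φ' y‖ ^ 2)
            + (m : ℝ) ^ 2 * (∫ y in Set.Ioo (0 : ℝ) 1, ‖φ y‖ ^ 2)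
          ≤ C * ((m : ℝ) ^ 2)⁻¹ * (∫ y in Set.Ioo (0 : ℝ) 1, ‖F y‖ ^ 2)) ∧
        (0 ≤ ∫ y in Set.Ioo (0 : ℝ) 1,
            ε * (y - y₀) / ((y - y₀) ^ 2 + ε ^ 2) ^ 2 * ‖φ y‖ ^ 2) ∧
        ((∫ y in Set.Ioo (0 : ℝ) 1,
            ε * (y - y₀) / ((y - y₀) ^ 2 + ε ^ 2) ^ 2 * ‖φ y‖ ^ 2)
          ≤ 2 * Real.sqrt (∫ y in Set.Ioo (0 : ℝ) 1, ‖φ y‖ ^ 2) *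
              Real.sqrt (∫ y in Set.Ioo (0 : ℝ) 1, ‖F y‖ ^ 2)) := by
  refine ⟨1, one_pos, fun m hm y₀ hy₀ ε hε _ φ φ' φ'' F hφ hφ' hφ'' hF hd hd' h0 h1 heq => ?_⟩
  have hre := neg_re_integral_mul_conj_ge hy₀ hε.ne' hφ hφ' hφ'' hd hd' h0 h1 heq
  have him := im_integral_mul_conj_eq hε.ne' hφ hφ' hφ'' hd hd' h0 h1 heq
  have hIre := (neg_le_abs _).trans
    (Complex.abs_re_le_norm (∫ y in Ioo (0 : ℝ) 1, F y * conj (φ y)))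
  have hIF := norm_integral_mul_conj_le hF hφ
  have hA : 0 ≤ ∫ y in Ioo (0 : ℝ) 1, ‖φ' y‖ ^ 2 := integral_nonneg fun _ => by positivity
  have hB : 0 ≤ ∫ y in Ioo (0 : ℝ) 1, ‖φ y‖ ^ 2 := integral_nonneg fun _ => by positivity
  have hG : 0 ≤ ∫ y in Ioo (0 : ℝ) 1, ‖F y‖ ^ 2 := integral_nonneg fun _ => by positivity
  have hQ : 0 ≤ ∫ y in Ioo (0 : ℝ) 1, (ε / ((y - y₀) ^ 2 + ε ^ 2) * ‖φ y‖) ^ 2 :=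
    integral_nonneg fun _ => by positivity
  refine ⟨?_, setIntegral_nonneg measurableSet_Ioo fun y hy => ?_, ?_⟩
  · rw [one_mul]
    exact add_mul_le_inv_mul_of_le_sqrt_mul_sqrt (mul_nonneg (by linarith) hA) (by positivity)
      hB hG (by nlinarith)
  · have : 0 < y - y₀ := by linarith [hy.1]
    positivity
  · rw [mul_assoc]
    exact (le_two_mul_norm_of_neg_re_le (sq_nonneg β) hβ.le hQ
      (integral_div_sq_add_sq_mul_norm_sq_le hy₀ hε.ne' hφ hφ' hd h0)
      (integral_mul_sub_div_sq_mul_norm_sq_le hε.ne' hφ hφ' hd h0 h1) (by nlinarith) him).trans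
      (mul_le_mul_of_nonneg_left hIF two_pos.le)

/-- Uniform `H¹` bounds for `β² < 1/4`: there is `C > 0` depending only on `β` such that for
every integer `m ≥ 1`, `y₀ ≤ 0`, `ε ∈ (0,1]`, and every `C²` function `φ : [0,1] → ℂ`
(derivatives `φ'`, `φ''`) with `φ(0) = φ(1) = 0` solving
`φ'' - m²φ + β²φ/(y-y₀+iε)² = F` on `(0,1)` with `F` continuous:
`(1-4β²) ‖φ'‖²_{L²} + m² ‖φ‖²_{L²} ≤ C m^{-2} ‖F‖²_{L²}`, and
`0 ≤ ∫₀¹ ε(y-y₀)/((y-y₀)²+ε²)² |φ|² dy ≤ 2 ‖φ‖_{L²} ‖F‖_{L²}`. -/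
theorem stmt10 (β : ℝ) (hβ0 : 0 < β) (hβ : β ^ 2 < 1 / 4) :
    ∃ C > (0 : ℝ), ∀ m : ℕ, 1 ≤ m → ∀ y₀ : ℝ, y₀ ≤ 0 → ∀ ε : ℝ, 0 < ε → ε ≤ 1 →
      ∀ φ φ' φ'' F : ℝ → ℂ,
        ContinuousOn φ (Set.Icc 0 1) →
        ContinuousOn φ' (Set.Icc 0 1) →
        ContinuousOn φ'' (Set.Icc 0 1) →
        ContinuousOn F (Set.Icc 0 1) →
        (∀ y ∈ Set.Ioo (0 : ℝ) 1, HasDerivAt φ (φ' y) y) →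
        (∀ y ∈ Set.Ioo (0 : ℝ) 1, HasDerivAt φ' (φ'' y) y) →
        φ 0 = 0 → φ 1 = 0 →
        (∀ y ∈ Set.Ioo (0 : ℝ) 1,
          φ'' y - (m : ℂ) ^ 2 * φ y +
            (β : ℂ) ^ 2 * φ y / ((y : ℂ) - (y₀ : ℂ) + (ε : ℂ) * Complex.I) ^ 2 = F y) →
        ((1 - 4 * β ^ 2) * (∫ y in Set.Ioo (0 : ℝ) 1, ‖φ' y‖ ^ 2)
            + (m : ℝ) ^ 2 * (∫ y in Set.Ioo (0 : ℝ) 1, ‖φ y‖ ^ 2)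
          ≤ C * ((m : ℝ) ^ 2)⁻¹ * (∫ y in Set.Ioo (0 : ℝ) 1, ‖F y‖ ^ 2)) ∧
        (0 ≤ ∫ y in Set.Ioo (0 : ℝ) 1,
            ε * (y - y₀) / ((y - y₀) ^ 2 + ε ^ 2) ^ 2 * ‖φ y‖ ^ 2) ∧
        ((∫ y in Set.Ioo (0 : ℝ) 1,
            ε * (y - y₀) / ((y - y₀) ^ 2 + ε ^ 2) ^ 2 * ‖φ y‖ ^ 2)
          ≤ 2 * Real.sqrt (∫ y in Set.Ioo (0 : ℝ) 1, ‖φ y‖ ^ 2) *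
              Real.sqrt (∫ y in Set.Ioo (0 : ℝ) 1, ‖F y‖ ^ 2)) :=
  stmt10_general β hβ
end

section
/- Let β > 0, m ≥ 1 an integer, and let c ∈ ℂ satisfy |y−c| > β/m for every y ∈ [0,1]. If ψ : [0,1] → ℂ is C² with ψ(0) = ψ(1) = 0 and ψ''(y) − m²ψ(y) + β²ψ(y)/(y−c)² = 0 for all y ∈ (0,1), then ψ ≡ 0. (Thus all eigenvalues of the Taylor–Goldstein boundary value problem lie in the set {c : dist(c,[0,1]) ≤ β/m}.) -/
/-!
Energy method: multiplying the equation by `conj ψ` and integrating by parts (the boundary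
terms vanish by the Dirichlet conditions) gives
`∫₀¹ (m² - β² Re (y - c)⁻²) |ψ|² + |ψ'|² = 0`.
Since `|y - c| > β/m`, the weight `m² - β² Re (y - c)⁻²` is positive on `[0,1]`, so the
continuous nonnegative integrand vanishes identically, and with it `ψ`.
-/

open Set intervalIntegral ComplexConjugate

theorem integral_re_mul_conj_add_norm_sq_deriv_eq_zero {𝕜 : Type*} [RCLike 𝕜] {a b : ℝ}
    {ψ ψ' ψ'' : ℝ → 𝕜} (hab : a ≤ b)
    (hψ : ContinuousOn ψ (Icc a b)) (hψ' : ContinuousOn ψ' (Icc a b))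
    (hψ'' : ContinuousOn ψ'' (Icc a b))
    (hd1 : ∀ y ∈ Ioo a b, HasDerivAt ψ (ψ' y) y)
    (hd2 : ∀ y ∈ Ioo a b, HasDerivAt ψ' (ψ'' y) y)
    (ha : ψ a = 0) (hb : ψ b = 0) :
    ∫ y in a..b, (RCLike.re (ψ'' y * conj (ψ y)) + ‖ψ' y‖ ^ 2) = 0 := by
  have hderiv : ∀ y ∈ Ioo a b, HasDerivAt (fun y => RCLike.re (ψ' y * conj (ψ y)))
      (RCLike.re (ψ'' y * conj (ψ y)) + ‖ψ' y‖ ^ 2) y := by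
    intro y hy
    have h := RCLike.reCLM.hasFDerivAt.comp_hasDerivAt y ((hd2 y hy).mul (hd1 y hy).star)
    rw [RCLike.reCLM_apply, map_add, RCLike.star_def, RCLike.mul_conj,
      ← RCLike.ofReal_pow, RCLike.ofReal_re] at h
    exact h
  have hcont : ContinuousOn (fun y => RCLike.re (ψ'' y * conj (ψ y)) + ‖ψ' y‖ ^ 2) (Icc a b) :=
    (RCLike.continuous_re.comp_continuousOn (hψ''.mul hψ.star)).add (hψ'.norm.pow 2)
  rw [integral_eq_sub_of_hasDerivAt_of_le hab
    (RCLike.continuous_re.comp_continuousOn (hψ'.mul hψ.star)) hderiv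
    (hcont.intervalIntegrable_of_Icc hab)]
  simp [ha, hb]

theorem eq_zero_on_Icc_of_integral_eq_zero {f : ℝ → ℝ} {a b : ℝ} (hab : a < b)
    (hf : ContinuousOn f (Icc a b)) (hnonneg : ∀ x ∈ Icc a b, 0 ≤ f x)
    (hint : ∫ x in a..b, f x = 0) : ∀ x ∈ Icc a b, f x = 0 := fun x hx =>
  le_antisymm (not_lt.1 fun hpos => (integral_pos hab hf
    (fun y hy => hnonneg y (Ioc_subset_Icc_self hy)) ⟨x, hx, hpos⟩).ne' hint) (hnonneg x hx)

theorem sq_mul_re_inv_sq_lt_sq {β m : ℝ} {w : ℂ} (hβ : 0 ≤ β) (h : β < m * ‖w‖) :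
    β ^ 2 * ((w ^ 2)⁻¹).re < m ^ 2 := by
  have hw : 0 < ‖w‖ := by
    refine (norm_nonneg w).lt_of_ne fun h0 => ?_
    rw [← h0, mul_zero] at h
    linarith
  calc β ^ 2 * ((w ^ 2)⁻¹).re ≤ β ^ 2 * (‖w‖ ^ 2)⁻¹ := by
        gcongr
        rw [← norm_pow, ← norm_inv]
        exact Complex.re_le_norm _
    _ < m ^ 2 := by
        rw [← div_eq_mul_inv, div_lt_iff₀ (by positivity)]
        nlinarith [mul_pos hw hw]

theorem re_mul_conj_of_sub_mul_add_mul_div_eq_zero {u v w : ℂ} {p q : ℝ}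
    (h : u - p * v + q * v / w = 0) :
    (u * conj v).re = (p - q * (w⁻¹).re) * ‖v‖ ^ 2 := by
  have hu : u * conj v = ((p * ‖v‖ ^ 2 : ℝ) : ℂ) - ((q * ‖v‖ ^ 2 : ℝ) : ℂ) * w⁻¹ := by
    rw [show u = p * v - q * v / w by linear_combination h]
    push_cast
    rw [← Complex.mul_conj']
    ring
  rw [hu, Complex.sub_re, Complex.ofReal_re, Complex.re_ofReal_mul]
  ring

/-- Eigenvalues of the Taylor–Goldstein boundary value problem lie within distance `β/m` of
`[0,1]`: if `|y - c| > β/m` for all `y ∈ [0,1]`, then every `C²` solution `ψ : [0,1] → ℂ`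
(with derivatives `ψ'`, `ψ''`) of `ψ'' - m²ψ + β²ψ/(y-c)² = 0` on `(0,1)` with
`ψ(0) = ψ(1) = 0` vanishes identically. -/
theorem stmt12 (β : ℝ) (hβ0 : 0 < β) (m : ℕ) (hm : 1 ≤ m)
    (c : ℂ) (hc : ∀ y ∈ Set.Icc (0 : ℝ) 1, β / m < ‖(y : ℂ) - c‖)
    (ψ ψ' ψ'' : ℝ → ℂ)
    (hψ : ContinuousOn ψ (Set.Icc 0 1))
    (hψ' : ContinuousOn ψ' (Set.Icc 0 1))
    (hψ'' : ContinuousOn ψ'' (Set.Icc 0 1))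
    (hd1 : ∀ y ∈ Set.Ioo (0 : ℝ) 1, HasDerivAt ψ (ψ' y) y)
    (hd2 : ∀ y ∈ Set.Ioo (0 : ℝ) 1, HasDerivAt ψ' (ψ'' y) y)
    (h0 : ψ 0 = 0) (h1 : ψ 1 = 0)
    (heq : ∀ y ∈ Set.Ioo (0 : ℝ) 1,
      ψ'' y - (m : ℂ) ^ 2 * ψ y + (β : ℂ) ^ 2 * ψ y / ((y : ℂ) - c) ^ 2 = 0) :
    ∀ y ∈ Set.Icc (0 : ℝ) 1, ψ y = 0 := by
  set q : ℝ → ℝ := fun y => (m : ℝ) ^ 2 - β ^ 2 * ((((y : ℂ) - c) ^ 2)⁻¹).re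
  have hq : ∀ y ∈ Icc (0 : ℝ) 1, 0 < q y := fun y hy =>
    sub_pos.2 <| sq_mul_re_inv_sq_lt_sq hβ0.le <|
      (div_lt_iff₀' (by exact_mod_cast hm)).1 (hc y hy)
  set f : ℝ → ℝ := fun y => (ψ'' y * conj (ψ y)).re + ‖ψ' y‖ ^ 2
  have hf_eq : ∀ y ∈ Ioo (0 : ℝ) 1, f y = q y * ‖ψ y‖ ^ 2 + ‖ψ' y‖ ^ 2 := fun y hy => by
    simp only [f, q]
    rw [re_mul_conj_of_sub_mul_add_mul_div_eq_zero (p := (m : ℝ) ^ 2) (q := β ^ 2)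
      (by push_cast; exact heq y hy)]
  have hf_nonneg : ∀ y ∈ Icc (0 : ℝ) 1, 0 ≤ f y := by
    intro y hy
    rcases eq_endpoints_or_mem_Ioo_of_mem_Icc hy with rfl | rfl | hy'
    · simp [f, h0]
    · simp [f, h1]
    · rw [hf_eq y hy']
      have hqy := hq y hy
      positivity
  have hf_zero := eq_zero_on_Icc_of_integral_eq_zero zero_lt_one
    ((Complex.continuous_re.comp_continuousOn (hψ''.mul hψ.star)).add (hψ'.norm.pow 2))
    hf_nonneg
    (integral_re_mul_conj_add_norm_sq_deriv_eq_zero zero_le_one hψ hψ' hψ'' hd1 hd2 h0 h1)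
  intro y hy
  rcases eq_endpoints_or_mem_Ioo_of_mem_Icc hy with rfl | rfl | hy'
  · exact h0
  · exact h1
  have hsum : q y * ‖ψ y‖ ^ 2 + ‖ψ' y‖ ^ 2 = 0 := (hf_eq y hy').symm.trans (hf_zero y hy)
  have hqy := hq y hy
  have hweighted := ((add_eq_zero_iff_of_nonneg (by positivity) (by positivity)).1 hsum).1
  simpa [hqy.ne'] using hweighted
end

section
/- Assume β² > 1/4 and let m ≥ 1 be an integer. There exists a sequence (c_k)_{k≥1} of strictly negative real numbers with c_k → 0 such that for each k the boundary value problem ψ''(y) − m²ψ(y) + β²ψ(y)/(y−c_k)² = 0 on (0,1), ψ(0) = ψ(1) = 0, admits a nontrivial C² solution; in particular, there are infinitely many negative real eigenvalues of this problem, accumulating at 0. -/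
/-!
Put `ν = √(β² - 1/4) > 0` and `a = 1/2 + iν`, a root of the indicial equation `a (a - 1) = -β²`.
Frobenius' method gives a solution `φ(t) = t^a G(t²)` of `φ'' = (m² - β²/t²) φ` on `t > 0`, with
`G` an entire power series and `G(0) = 1`. Since the potential is real, the Wronskian
`Im (φ · conj φ')` is constant; its limit at `t = 0` is `-ν`. For `c < 0` and `α = φ(-c)`, the
function `ψ(y) = conj α φ(y - c) - α conj φ(y - c)` solves the Taylor–Goldstein equation with
`ψ(0) = 0`, vanishes at `y = 1` iff `Im (φ(-c) conj φ(1 - c)) = 0`, and is nontrivial because of the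
Wronskian. Finally `φ(s) = s^{1/2} e^{iν log s} G(s²)` winds around `0` infinitely often as
`s → 0⁺` while `φ(1 + s) → φ(1) ≠ 0`, so `Im (φ(s) conj φ(1 + s))` has zeros `s_k ↓ 0`, and the
`c_k = -s_k` are eigenvalues.
-/

open Filter Topology ComplexConjugate FormalMultilinearSeries

noncomputable section

namespace TaylorGoldstein

section EntireSeries

variable {𝕜 : Type*} [RCLike 𝕜] {a : ℕ → 𝕜}

def EntireCoeffs (a : ℕ → 𝕜) : Prop := ∀ R : ℝ, Summable fun k => ‖a k‖ * R ^ k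

def derivCoeffs (a : ℕ → 𝕜) (k : ℕ) : 𝕜 := (k + 1) * a (k + 1)

lemma norm_derivCoeffs (a : ℕ → 𝕜) (k : ℕ) : ‖derivCoeffs a k‖ = (k + 1) * ‖a (k + 1)‖ := by
  rw [derivCoeffs, norm_mul, ← Nat.cast_succ, RCLike.norm_natCast, Nat.cast_succ]

lemma EntireCoeffs.summable (ha : EntireCoeffs a) (z : 𝕜) : Summable fun k => a k * z ^ k :=
  .of_norm (by simpa only [norm_mul, norm_pow] using ha ‖z‖)

lemma EntireCoeffs.hasSum (ha : EntireCoeffs a) (z : 𝕜) :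
    HasSum (fun k => a k * z ^ k) (ofScalarsSum a z) := by
  simpa only [ofScalars_sum_eq, smul_eq_mul] using (ha.summable z).hasSum

lemma EntireCoeffs.deriv (ha : EntireCoeffs a) : EntireCoeffs (derivCoeffs a) := by
  intro R
  refine .of_norm_bounded ((summable_nat_add_iff 1).2 (ha (2 * |R| + 2))) fun k => ?_
  have hk : (k + 1 : ℝ) ≤ 2 ^ (k + 1) := by exact_mod_cast (Nat.lt_two_pow_self).le
  have hR : |R| ^ k ≤ (|R| + 1) ^ (k + 1) :=
    (pow_le_pow_left₀ (abs_nonneg R) (by linarith) k).trans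
      (pow_le_pow_right₀ (by linarith [abs_nonneg R]) k.le_succ)
  calc ‖‖derivCoeffs a k‖ * R ^ k‖ = ‖a (k + 1)‖ * ((k + 1) * |R| ^ k) := by
        rw [norm_mul, norm_norm, norm_derivCoeffs, norm_pow, Real.norm_eq_abs]; ring
    _ ≤ ‖a (k + 1)‖ * (2 ^ (k + 1) * (|R| + 1) ^ (k + 1)) := by gcongr
    _ = ‖a (k + 1)‖ * (2 * |R| + 2) ^ (k + 1) := by rw [← mul_pow]; ring_nf

lemma EntireCoeffs.hasDerivAt (ha : EntireCoeffs a) (z : 𝕜) :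
    HasDerivAt (ofScalarsSum a) (ofScalarsSum (derivCoeffs a) z) z := by
  set R := ‖z‖ + 1
  have hu : Summable fun k => ‖a k‖ * k * R ^ (k - 1) := by
    refine (summable_nat_add_iff 1).1 ?_
    simpa [norm_derivCoeffs, mul_comm, mul_left_comm] using ha.deriv R
  have hbound : ∀ k (w : 𝕜), w ∈ Metric.ball 0 R →
      ‖a k * (k * w ^ (k - 1))‖ ≤ ‖a k‖ * k * R ^ (k - 1) := by
    intro k w hw
    rw [mem_ball_zero_iff] at hw
    rw [norm_mul, norm_mul, norm_pow, RCLike.norm_natCast, ← mul_assoc]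
    gcongr
  have hd := hasDerivAt_tsum_of_isPreconnected hu Metric.isOpen_ball
    (convex_ball 0 R).isPreconnected (fun k w _ => (hasDerivAt_pow k w).const_mul (a k)) hbound
    (Metric.mem_ball_self (by positivity)) (ha.summable 0) (y := z) (by simp [R])
  have hs : Summable fun k => a k * (k * z ^ (k - 1)) :=
    .of_norm_bounded hu fun k => hbound k z (by simp [R])
  have hsum : ofScalarsSum a = fun w => ∑' k, a k * w ^ k := by
    ext w; simp only [ofScalars_sum_eq, smul_eq_mul]
  rw [hsum]
  refine hd.congr_deriv ?_
  rw [hs.tsum_eq_zero_add, ofScalars_sum_eq]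
  simp only [derivCoeffs, smul_eq_mul]
  push_cast
  simp only [zero_mul, mul_zero, zero_add]
  exact tsum_congr fun k => by ring

lemma hasSum_mul_pow_of_shift {e : ℕ → 𝕜} {z S : 𝕜} (h0 : e 0 = 0)
    (hs : HasSum (fun k => e (k + 1) * z ^ k) S) : HasSum (fun k => e k * z ^ k) (z * S) := by
  refine (hasSum_nat_add_iff' 1).1 ?_
  simpa [h0, pow_succ', mul_assoc, mul_left_comm] using hs.mul_left z

end EntireSeries

section FrobeniusSeries

open Complex Nat

variable (μ ν : ℝ)

def frobeniusCoeff : ℕ → ℂ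
  | 0 => 1
  | k + 1 => frobeniusCoeff k * μ / (4 * (k + 1) * (k + 1 + ν * I))

variable {μ ν}

lemma natCast_add_one_le_norm_add_mul_I (k : ℕ) : (k + 1 : ℝ) ≤ ‖(k + 1 + ν * I : ℂ)‖ :=
  calc (k + 1 : ℝ) = (k + 1 + ν * I : ℂ).re := by simp
    _ ≤ _ := re_le_norm _

lemma frobeniusCoeff_succ_mul (k : ℕ) :
    frobeniusCoeff μ ν (k + 1) * (4 * (k + 1) * (k + 1 + ν * I)) = frobeniusCoeff μ ν k * μ := by
  have hk : (k + 1 + ν * I : ℂ) ≠ 0 :=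
    norm_pos_iff.1 (lt_of_lt_of_le (by positivity) (natCast_add_one_le_norm_add_mul_I k))
  rw [frobeniusCoeff, div_mul_cancel₀]
  exact mul_ne_zero (mul_ne_zero (by norm_num) (Nat.cast_add_one_ne_zero k)) hk

lemma norm_frobeniusCoeff_le (k : ℕ) : ‖frobeniusCoeff μ ν k‖ ≤ (|μ| / 4) ^ k / k ! := by
  induction k with
  | zero => simp [frobeniusCoeff]
  | succ k ih =>
    have hden : 4 * (k + 1 : ℝ) ≤ ‖(4 * (k + 1) * (k + 1 + ν * I) : ℂ)‖ := by
      have hk := natCast_add_one_le_norm_add_mul_I (ν := ν) k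
      rw [norm_mul, norm_mul, show ((k : ℂ) + 1) = ((k + 1 : ℝ) : ℂ) by push_cast; ring,
        Complex.norm_real, Real.norm_of_nonneg (by positivity)]
      norm_num
      nlinarith
    calc ‖frobeniusCoeff μ ν (k + 1)‖
        = ‖frobeniusCoeff μ ν k‖ * |μ| / ‖(4 * (k + 1) * (k + 1 + ν * I) : ℂ)‖ := by
          rw [frobeniusCoeff, norm_div, norm_mul, Complex.norm_real, Real.norm_eq_abs]
      _ ≤ (|μ| / 4) ^ k / k ! * |μ| / (4 * (k + 1)) := by gcongr
      _ = (|μ| / 4) ^ (k + 1) / (k + 1)! := by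
        rw [factorial_succ]; push_cast; field_simp; ring

lemma entireCoeffs_frobeniusCoeff : EntireCoeffs (frobeniusCoeff μ ν) := by
  intro R
  refine .of_norm_bounded (Real.summable_pow_div_factorial (|μ| / 4 * |R|)) fun k => ?_
  rw [norm_mul, norm_norm, norm_pow, Real.norm_eq_abs, mul_pow, mul_div_right_comm]
  gcongr
  exact norm_frobeniusCoeff_le k

lemma frobeniusSeries_ode (w : ℂ) :
    4 * w * ofScalarsSum (derivCoeffs (derivCoeffs (frobeniusCoeff μ ν))) w
      + 4 * (1 + ν * I) * ofScalarsSum (derivCoeffs (frobeniusCoeff μ ν)) w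
      = μ * ofScalarsSum (frobeniusCoeff μ ν) w := by
  set b := frobeniusCoeff μ ν
  have hb : EntireCoeffs b := entireCoeffs_frobeniusCoeff
  have hE : HasSum (fun k => (k * derivCoeffs b k) * w ^ k)
      (w * ofScalarsSum (derivCoeffs (derivCoeffs b)) w) :=
    hasSum_mul_pow_of_shift (by simp) (by simpa [derivCoeffs] using hb.deriv.deriv.hasSum w)
  have hsum := (hE.mul_left 4).add ((hb.deriv.hasSum w).mul_left (4 * (1 + ν * I)))
  rw [← mul_assoc] at hsum
  refine hsum.unique ?_
  convert (hb.hasSum w).mul_left (μ : ℂ) using 2 with k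
  rw [derivCoeffs]
  linear_combination w ^ k * frobeniusCoeff_succ_mul (μ := μ) (ν := ν) k

end FrobeniusSeries

section FrobeniusSolution

open Complex

variable {μ ν t : ℝ}

def frobeniusExponent (ν : ℝ) : ℂ := 1 / 2 + ν * I

def frobeniusSolution (μ ν : ℝ) (t : ℝ) : ℂ :=
  (t : ℂ) ^ frobeniusExponent ν * ofScalarsSum (frobeniusCoeff μ ν) ((t : ℂ) ^ 2)

def frobeniusSolutionDeriv (μ ν : ℝ) (t : ℝ) : ℂ :=
  (t : ℂ) ^ frobeniusExponent ν *
    (frobeniusExponent ν * ofScalarsSum (frobeniusCoeff μ ν) ((t : ℂ) ^ 2) / t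
      + 2 * t * ofScalarsSum (derivCoeffs (frobeniusCoeff μ ν)) ((t : ℂ) ^ 2))

lemma hasDerivAt_ofReal_cpow (ht : 0 < t) {c : ℂ} (hc : c ≠ 0) :
    HasDerivAt (fun s : ℝ => (s : ℂ) ^ c) (c * (t : ℂ) ^ c / t) t := by
  have ht' : (t : ℂ) ≠ 0 := ofReal_ne_zero.2 ht.ne'
  simpa [cpow_sub _ _ ht', mul_div_assoc] using hasDerivAt_ofReal_cpow_const ht.ne' hc

lemma EntireCoeffs.hasDerivAt_ofReal_sq {a : ℕ → ℂ} (ha : EntireCoeffs a) (t : ℝ) :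
    HasDerivAt (fun s : ℝ => ofScalarsSum a ((s : ℂ) ^ 2))
      (2 * t * ofScalarsSum (derivCoeffs a) ((t : ℂ) ^ 2)) t := by
  refine ((ha.hasDerivAt _).comp (t : ℂ) (hasDerivAt_pow 2 (t : ℂ))).comp_ofReal.congr_deriv ?_
  push_cast
  ring

lemma frobeniusExponent_ne_zero : frobeniusExponent ν ≠ 0 := fun h => by
  simpa [frobeniusExponent] using congrArg re h

lemma frobeniusExponent_mul_sub_one :
    frobeniusExponent ν * (frobeniusExponent ν - 1) = -(ν ^ 2 + 1 / 4) := by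
  rw [frobeniusExponent]
  linear_combination (ν : ℂ) ^ 2 * I_sq

lemma hasDerivAt_frobeniusSolution (ht : 0 < t) :
    HasDerivAt (frobeniusSolution μ ν) (frobeniusSolutionDeriv μ ν t) t := by
  have h := (hasDerivAt_ofReal_cpow ht (frobeniusExponent_ne_zero (ν := ν))).mul
    ((entireCoeffs_frobeniusCoeff (μ := μ) (ν := ν)).hasDerivAt_ofReal_sq t)
  refine h.congr_deriv ?_
  simp only [frobeniusSolutionDeriv]
  ring

lemma hasDerivAt_frobeniusSolutionDeriv (ht : 0 < t) :
    HasDerivAt (frobeniusSolutionDeriv μ ν)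
      ((μ - (ν ^ 2 + 1 / 4) / t ^ 2 : ℝ) * frobeniusSolution μ ν t) t := by
  have hb := entireCoeffs_frobeniusCoeff (μ := μ) (ν := ν)
  have hG := hb.hasDerivAt_ofReal_sq t
  have hG' := hb.deriv.hasDerivAt_ofReal_sq t
  have hid : HasDerivAt (fun s : ℝ => (s : ℂ)) 1 t := hasDerivAt_id t |>.ofReal_comp
  have ht' : (t : ℂ) ≠ 0 := ofReal_ne_zero.2 ht.ne'
  have h := (hasDerivAt_ofReal_cpow ht (frobeniusExponent_ne_zero (ν := ν))).mul
    (((hG.const_mul (frobeniusExponent ν)).div hid ht').add ((hid.const_mul 2).mul hG'))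
  refine h.congr_deriv ?_
  have hode := frobeniusSeries_ode (μ := μ) (ν := ν) ((t : ℂ) ^ 2)
  have ha' : 4 * (1 + ν * I) = 2 * (2 * frobeniusExponent ν + 1) := by
    rw [frobeniusExponent]; ring
  rw [ha'] at hode
  simp only [Pi.add_apply, Pi.mul_apply, Pi.div_apply, frobeniusSolution]
  set P := (t : ℂ) ^ frobeniusExponent ν
  push_cast
  field_simp
  linear_combination 4 * P * ofScalarsSum (frobeniusCoeff μ ν) ((t : ℂ) ^ 2)
      * frobeniusExponent_mul_sub_one (ν := ν) + 4 * P * t ^ 2 * hode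

end FrobeniusSolution

section Wronskian

open Complex

lemma hasDerivAt_im_mul_conj_deriv {f f' : ℝ → ℂ} {V t : ℝ} (hf : HasDerivAt f (f' t) t)
    (hf' : HasDerivAt f' (V * f t) t) : HasDerivAt (fun s => (f s * conj (f' s)).im) 0 t := by
  refine (imCLM.hasFDerivAt.comp_hasDerivAt t (hf.mul hf'.star)).congr_deriv ?_
  simp [mul_im, mul_re]
  ring

variable {μ ν t : ℝ}

lemma ofReal_cpow_frobeniusExponent_mul_conj (ht : 0 < t) :
    (t : ℂ) ^ frobeniusExponent ν * conj ((t : ℂ) ^ frobeniusExponent ν) = t := by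
  rw [mul_conj, normSq_eq_norm_sq, norm_cpow_eq_rpow_re_of_pos ht]
  norm_num [frobeniusExponent]
  norm_cast
  rw [← Real.rpow_natCast, ← Real.rpow_mul ht.le]
  norm_num

lemma frobeniusSolution_mul_conj_deriv (ht : 0 < t) :
    frobeniusSolution μ ν t * conj (frobeniusSolutionDeriv μ ν t)
      = conj (frobeniusExponent ν) * (ofScalarsSum (frobeniusCoeff μ ν) ((t : ℂ) ^ 2)
          * conj (ofScalarsSum (frobeniusCoeff μ ν) ((t : ℂ) ^ 2)))
        + 2 * t ^ 2 * (ofScalarsSum (frobeniusCoeff μ ν) ((t : ℂ) ^ 2)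
          * conj (ofScalarsSum (derivCoeffs (frobeniusCoeff μ ν)) ((t : ℂ) ^ 2))) := by
  have hP := ofReal_cpow_frobeniusExponent_mul_conj (ν := ν) ht
  have ht' : (t : ℂ) ≠ 0 := ofReal_ne_zero.2 ht.ne'
  simp only [frobeniusSolution, frobeniusSolutionDeriv, map_mul, map_add, map_div₀, conj_ofReal,
    map_ofNat]
  field_simp
  linear_combination ofScalarsSum (frobeniusCoeff μ ν) ((t : ℂ) ^ 2)
    * (conj (frobeniusExponent ν) * conj (ofScalarsSum (frobeniusCoeff μ ν) ((t : ℂ) ^ 2))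
      + t ^ 2 * 2 * conj (ofScalarsSum (derivCoeffs (frobeniusCoeff μ ν)) ((t : ℂ) ^ 2))) * hP

lemma EntireCoeffs.continuous_ofReal_sq {a : ℕ → ℂ} (ha : EntireCoeffs a) :
    Continuous fun s : ℝ => ofScalarsSum a ((s : ℂ) ^ 2) :=
  continuous_iff_continuousAt.2 fun s => (ha.hasDerivAt_ofReal_sq s).continuousAt

lemma im_frobeniusSolution_mul_conj_deriv (ht : 0 < t) :
    (frobeniusSolution μ ν t * conj (frobeniusSolutionDeriv μ ν t)).im = -ν := by
  have hb := entireCoeffs_frobeniusCoeff (μ := μ) (ν := ν)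
  set G := fun s : ℝ => ofScalarsSum (frobeniusCoeff μ ν) ((s : ℂ) ^ 2)
  set G' := fun s : ℝ => ofScalarsSum (derivCoeffs (frobeniusCoeff μ ν)) ((s : ℂ) ^ 2)
  -- by `frobeniusSolution_mul_conj_deriv`, `K` extends the Wronskian continuously to `s = 0`
  set K : ℝ → ℝ := fun s =>
    (conj (frobeniusExponent ν) * (G s * conj (G s)) + 2 * s ^ 2 * (G s * conj (G' s))).im
  have hKc : Continuous K := by
    have := hb.continuous_ofReal_sq
    have := hb.deriv.continuous_ofReal_sq
    fun_prop
  have hK' : ∀ s > 0, HasDerivAt K 0 s := fun s hs =>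
    (hasDerivAt_im_mul_conj_deriv (hasDerivAt_frobeniusSolution hs)
      (hasDerivAt_frobeniusSolutionDeriv hs)).congr_of_eventuallyEq <| by
        filter_upwards [Ioi_mem_nhds hs] with r hr
        rw [frobeniusSolution_mul_conj_deriv hr]
  obtain ⟨s, -, hslope⟩ := exists_hasDerivAt_eq_slope K (fun _ => 0) ht hKc.continuousOn
    fun s hs => hK' s hs.1
  have hK0 : K 0 = -ν := by simp [K, G, G', frobeniusExponent, frobeniusCoeff]
  rw [frobeniusSolution_mul_conj_deriv ht, ← hK0]
  rw [eq_div_iff (by linarith), zero_mul, eq_comm, sub_eq_zero] at hslope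
  exact hslope

end Wronskian

section Oscillation

open Complex Real

lemma im_exp_mul_I_mul (φ : ℝ) (w : ℂ) :
    (exp (φ * I) * w).im = ‖w‖ * Real.sin (φ + arg w) := by
  conv_lhs => rw [← norm_mul_exp_arg_mul_I w]
  rw [mul_left_comm, ← Complex.exp_add, ← add_mul, ← ofReal_add, im_ofReal_mul,
    exp_ofReal_mul_I_im]

lemma exists_lt_im_exp_mul_eq_zero {H : ℝ → ℂ} {w : ℂ} (hH : Continuous H) (hw : w ≠ 0)
    (hlim : Tendsto H atBot (𝓝 w)) {ν : ℝ} (hν : 0 < ν) (X : ℝ) :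
    ∃ x < X, (exp (ν * x * I) * H x).im = 0 := by
  set f : ℝ → ℝ := fun x => (exp (ν * x * I) * H x).im
  have hr : 0 < ‖w‖ := norm_pos_iff.2 hw
  obtain ⟨X', hX'⟩ := eventually_atBot.1
    ((hlim.eventually (Metric.ball_mem_nhds w (half_pos hr))).and (eventually_lt_atBot X))
  have hclose : ∀ x ≤ X', |f x - ‖w‖ * Real.sin (ν * x + arg w)| < ‖w‖ / 2 := by
    intro x hx
    have hsplit :
        f x = ‖w‖ * Real.sin (ν * x + arg w) + (exp (↑(ν * x) * I) * (H x - w)).im := by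
      simp only [f, ← im_exp_mul_I_mul, ofReal_mul, ← add_im, ← mul_add, add_sub_cancel]
    rw [hsplit, add_sub_cancel_left]
    calc _ ≤ ‖exp (↑(ν * x) * I) * (H x - w)‖ := abs_im_le_norm _
      _ = dist (H x) w := by rw [norm_mul, norm_exp_ofReal_mul_I, one_mul, dist_eq_norm]
      _ < ‖w‖ / 2 := (hX' x hx).1
  -- `ν x + arg w` is `π / 2` at `xp` and `-π / 2` at `xm`, modulo `2π`
  obtain ⟨n, hn⟩ := exists_nat_gt ((π / 2 - arg w - ν * X') / (2 * π))
  set xp := (π / 2 - n * (2 * π) - arg w) / ν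
  set xm := (-(π / 2) - n * (2 * π) - arg w) / ν
  have hxp : xp ≤ X' := by
    rw [div_le_iff₀ hν]
    rw [div_lt_iff₀ (by positivity)] at hn
    linarith
  have hxm : xm ≤ xp := by simp only [xm, xp]; gcongr; linarith [pi_pos]
  have hfp : 0 < f xp := by
    have := hclose xp hxp
    rw [mul_div_cancel₀ _ hν.ne', sub_add_cancel, Real.sin_sub_nat_mul_two_pi,
      Real.sin_pi_div_two] at this
    linarith [(abs_lt.1 this).1]
  have hfm : f xm < 0 := by
    have := hclose xm (hxm.trans hxp)
    rw [mul_div_cancel₀ _ hν.ne', sub_add_cancel, Real.sin_sub_nat_mul_two_pi, Real.sin_neg,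
      Real.sin_pi_div_two] at this
    linarith [(abs_lt.1 this).2]
  have hfc : Continuous f := by fun_prop
  obtain ⟨x, hx, hfx⟩ := intermediate_value_Icc hxm hfc.continuousOn ⟨hfm.le, hfp.le⟩
  exact ⟨x, (hX' x (hx.2.trans hxp)).2, hfx⟩

lemma exists_seq_strictAnti_tendsto_zero_of_forall_exists_lt {Z : Set ℝ}
    (hZ : ∀ ε > 0, ∃ s ∈ Z, 0 < s ∧ s < ε) :
    ∃ u : ℕ → ℝ, StrictAnti u ∧ (∀ n, 0 < u n) ∧ Tendsto u atTop (𝓝 0) ∧ ∀ n, u n ∈ Z := by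
  set Z' := {s ∈ Z | 0 < s}
  have hglb : IsGLB Z' 0 := by
    refine ⟨fun s hs => hs.2.le, fun b hb => not_lt.1 fun hb0 => ?_⟩
    obtain ⟨s, hsZ, hs0, hsb⟩ := hZ b hb0
    exact (hb ⟨hsZ, hs0⟩).not_gt hsb
  obtain ⟨s, hsZ, hs0, -⟩ := hZ 1 one_pos
  obtain ⟨u, hu, hu0, hlim, huZ⟩ :=
    hglb.exists_seq_strictAnti_tendsto_of_notMem (fun h => h.2.false) ⟨s, hsZ, hs0⟩
  exact ⟨u, hu, hu0, hlim, fun n => (huZ n).1⟩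

end Oscillation

section FrobeniusZeros

open Complex

variable {μ ν t : ℝ}

lemma ofReal_exp_cpow_frobeniusExponent (x : ℝ) :
    ((Real.exp x : ℝ) : ℂ) ^ frobeniusExponent ν = Real.exp (x / 2) * exp (ν * x * I) := by
  rw [cpow_def_of_ne_zero (ofReal_ne_zero.2 (Real.exp_pos x).ne'),
    ← ofReal_log (Real.exp_pos x).le, Real.log_exp, ofReal_exp, ← Complex.exp_add,
    frobeniusExponent]
  congr 1
  push_cast
  ring

lemma frobeniusSolution_ne_zero (hν : ν ≠ 0) (ht : 0 < t) : frobeniusSolution μ ν t ≠ 0 := by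
  intro h
  have hW := im_frobeniusSolution_mul_conj_deriv (μ := μ) (ν := ν) ht
  rw [h, zero_mul, zero_im] at hW
  exact hν (neg_eq_zero.1 hW.symm)

lemma exists_im_frobeniusSolution_mul_conj_eq_zero (hν : 0 < ν) {ε : ℝ} (hε : 0 < ε) :
    ∃ s, (frobeniusSolution μ ν s * conj (frobeniusSolution μ ν (1 + s))).im = 0 ∧
      0 < s ∧ s < ε := by
  have hG := (entireCoeffs_frobeniusCoeff (μ := μ) (ν := ν)).continuous_ofReal_sq
  have hφ : ∀ t > 0, ContinuousAt (frobeniusSolution μ ν) t := fun t ht =>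
    (hasDerivAt_frobeniusSolution ht).continuousAt
  set h : ℝ → ℂ := fun s =>
    ofScalarsSum (frobeniusCoeff μ ν) ((s : ℂ) ^ 2) * conj (frobeniusSolution μ ν (1 + s))
  have hh : ∀ s > -1, ContinuousAt h s := fun s hs =>
    hG.continuousAt.mul (continuous_conj.continuousAt.comp
      ((hφ (1 + s) (by linarith)).comp (continuous_const.add continuous_id).continuousAt))
  have hH : Continuous fun x => h (Real.exp x) := continuous_iff_continuousAt.2 fun x =>
    (hh _ (by linarith [Real.exp_pos x])).comp Real.continuous_exp.continuousAt
  have hlim : Tendsto (fun x => h (Real.exp x)) atBot (𝓝 (conj (frobeniusSolution μ ν 1))) := by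
    have h0 : h 0 = conj (frobeniusSolution μ ν 1) := by simp [h, frobeniusCoeff]
    exact h0 ▸ ((hh 0 (by norm_num)).tendsto.comp Real.tendsto_exp_atBot)
  obtain ⟨x, hx, hx0⟩ := exists_lt_im_exp_mul_eq_zero hH
    ((map_ne_zero _).2 (frobeniusSolution_ne_zero hν.ne' one_pos)) hlim hν (Real.log ε)
  refine ⟨Real.exp x, ?_, Real.exp_pos x, (Real.lt_log_iff_exp_lt hε).1 hx⟩
  rw [frobeniusSolution, ofReal_exp_cpow_frobeniusExponent, mul_assoc, mul_assoc, im_ofReal_mul]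
  exact mul_eq_zero_of_right _ hx0

end FrobeniusZeros

section DirichletSolution

open Complex Set

lemma _root_.HasDerivAt.exists_ne_zero_of_mem_nhds {𝕜 F : Type*} [NontriviallyNormedField 𝕜]
    [NormedAddCommGroup F] [NormedSpace 𝕜 F] {f : 𝕜 → F} {f' : F} {y : 𝕜} {s : Set 𝕜}
    (hf : HasDerivAt f f' y) (hf' : f' ≠ 0) (hs : s ∈ 𝓝 y) : ∃ x ∈ s, f x ≠ 0 := by
  by_contra! h
  exact hf' (hf.unique ((hasDerivAt_const y 0).congr_of_eventuallyEq (mem_of_superset hs h)))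

variable {φ φ' : ℝ → ℂ} {V : ℝ → ℝ} {c : ℝ}

lemma exists_dirichlet_solution (hV : ContinuousOn V (Ioi 0))
    (hφ : ∀ t > 0, HasDerivAt φ (φ' t) t) (hφ' : ∀ t > 0, HasDerivAt φ' (V t * φ t) t)
    (hW : ∀ t > 0, (φ t * conj (φ' t)).im ≠ 0) (hc : c < 0)
    (hzero : (φ (-c) * conj (φ (1 - c))).im = 0) :
    ∃ ψ ψ' : ℝ → ℂ, ContinuousOn ψ (Icc 0 1) ∧ ContinuousOn ψ' (Icc 0 1) ∧
      ContinuousOn (fun y => V (y - c) * ψ y) (Icc 0 1) ∧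
      (∀ y ∈ Ioo (0 : ℝ) 1, HasDerivAt ψ (ψ' y) y) ∧
      (∀ y ∈ Ioo (0 : ℝ) 1, HasDerivAt ψ' (V (y - c) * ψ y) y) ∧ ψ 0 = 0 ∧ ψ 1 = 0 ∧
      ∃ y ∈ Icc (0 : ℝ) 1, ψ y ≠ 0 := by
  set α := φ (-c)
  set ψ : ℝ → ℂ := fun y => conj α * φ (y - c) - α * conj (φ (y - c))
  set ψ' : ℝ → ℂ := fun y => conj α * φ' (y - c) - α * conj (φ' (y - c))
  have hpos : ∀ y ≥ 0, y - c > 0 := fun y hy => by linarith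
  have hψ : ∀ y ≥ 0, HasDerivAt ψ (ψ' y) y := fun y hy => by
    have h := (hφ _ (hpos y hy)).comp_sub_const y c
    exact (h.const_mul _).sub (h.star.const_mul α)
  have hψ' : ∀ y ≥ 0, HasDerivAt ψ' (V (y - c) * ψ y) y := fun y hy => by
    have h := (hφ' _ (hpos y hy)).comp_sub_const y c
    refine ((h.const_mul _).sub (h.star.const_mul α)).congr_deriv ?_
    simp only [ψ, star_mul', Complex.star_def, conj_ofReal]
    ring
  have hψc : ContinuousOn ψ (Icc 0 1) := fun y hy =>
    (hψ y hy.1).continuousAt.continuousWithinAt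
  refine ⟨ψ, ψ', hψc, fun y hy => (hψ' y hy.1).continuousAt.continuousWithinAt,
    (continuous_ofReal.comp_continuousOn (hV.comp (continuousOn_id.sub continuousOn_const)
      fun y hy => hpos y hy.1)).mul hψc,
    fun y hy => hψ y hy.1.le, fun y hy => hψ' y hy.1.le, by simp [ψ, α, mul_comm], ?_, ?_⟩
  · -- `ψ 1 = conj v - v` for the real number `v = α * conj (φ (1 - c))`
    have hv := conj_eq_iff_im.2 hzero
    rw [map_mul, conj_conj] at hv
    simp only [ψ]
    rw [← hv]
    ring
  · -- the Wronskian identity `ψ conj φ' - ψ' conj φ = conj α · 2i Im (φ conj φ')` at `y = 1/2`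
    set y : ℝ := 1 / 2
    have hid : ψ y * conj (φ' (y - c)) - ψ' y * conj (φ (y - c))
        = conj α * ((2 * (φ (y - c) * conj (φ' (y - c))).im : ℝ) * I) := by
      rw [← sub_conj]
      simp only [ψ, ψ', map_mul, conj_conj]
      ring
    have hne : conj α * ((2 * (φ (y - c) * conj (φ' (y - c))).im : ℝ) * I) ≠ 0 := by
      have hα : α ≠ 0 := fun h0 => hW (-c) (by linarith) (by simp [α, h0])
      exact mul_ne_zero ((map_ne_zero _).2 hα) (mul_ne_zero
        (ofReal_ne_zero.2 (mul_ne_zero two_ne_zero (hW _ (hpos y (by norm_num))))) I_ne_zero)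
    by_cases hψy : ψ y = 0
    · refine (hψ y (by norm_num)).exists_ne_zero_of_mem_nhds (fun h0 => hne ?_)
        (Icc_mem_nhds (by norm_num) (by norm_num))
      rw [← hid, hψy, h0, zero_mul, zero_mul, sub_zero]
    · exact ⟨y, by norm_num, hψy⟩

end DirichletSolution

end TaylorGoldstein

end

open TaylorGoldstein Complex

theorem stmt14_general (β : ℝ) (hβ : 1 / 4 < β ^ 2) (m : ℕ) :
    ∃ c : ℕ → ℝ, (∀ k, c k < 0) ∧ Function.Injective c ∧ Tendsto c atTop (nhds 0) ∧
      ∀ k, ∃ ψ ψ' ψ'' : ℝ → ℂ,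
        ContinuousOn ψ (Set.Icc 0 1) ∧
        ContinuousOn ψ' (Set.Icc 0 1) ∧
        ContinuousOn ψ'' (Set.Icc 0 1) ∧
        (∀ y ∈ Set.Ioo (0 : ℝ) 1, HasDerivAt ψ (ψ' y) y) ∧
        (∀ y ∈ Set.Ioo (0 : ℝ) 1, HasDerivAt ψ' (ψ'' y) y) ∧
        ψ 0 = 0 ∧ ψ 1 = 0 ∧
        (∀ y ∈ Set.Ioo (0 : ℝ) 1,
          ψ'' y - (m : ℂ) ^ 2 * ψ y +
            (β : ℂ) ^ 2 * ψ y / ((y : ℂ) - ((c k : ℝ) : ℂ)) ^ 2 = 0) ∧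
        ∃ y ∈ Set.Icc (0 : ℝ) 1, ψ y ≠ 0 := by
  set ν := √(β ^ 2 - 1 / 4)
  have hν : 0 < ν := Real.sqrt_pos.2 (by linarith)
  have hβν : (β : ℂ) ^ 2 = ν ^ 2 + 1 / 4 := by
    have hν2 : ν ^ 2 = β ^ 2 - 1 / 4 := Real.sq_sqrt (by linarith)
    rw [← ofReal_pow, show β ^ 2 = ν ^ 2 + 1 / 4 by linarith]
    push_cast
    ring
  set φ := frobeniusSolution ((m : ℝ) ^ 2) ν
  obtain ⟨s, hs, hs0, hlim, hzero⟩ := exists_seq_strictAnti_tendsto_zero_of_forall_exists_lt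
    (Z := {s | (φ s * conj (φ (1 + s))).im = 0}) fun ε hε =>
      exists_im_frobeniusSolution_mul_conj_eq_zero hν hε
  refine ⟨fun k => -s k, fun k => neg_neg_of_pos (hs0 k), neg_injective.comp hs.injective,
    by simpa using hlim.neg, fun k => ?_⟩
  obtain ⟨ψ, ψ', hψc, hψ'c, hψ''c, hψ, hψ', hψ0, hψ1, hψne⟩ :=
    exists_dirichlet_solution (V := fun t => (m : ℝ) ^ 2 - (ν ^ 2 + 1 / 4) / t ^ 2)
      (fun t ht => by fun_prop (disch := exact (pow_pos ht 2).ne'))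
      (fun t ht => hasDerivAt_frobeniusSolution ht)
      (fun t ht => hasDerivAt_frobeniusSolutionDeriv ht)
      (fun t ht => by rw [im_frobeniusSolution_mul_conj_deriv ht]; exact neg_ne_zero.2 hν.ne')
      (neg_neg_of_pos (hs0 k)) (by simpa [add_comm] using hzero k)
  refine ⟨ψ, ψ', _, hψc, hψ'c, hψ''c, hψ, hψ', hψ0, hψ1, fun y hy => ?_, hψne⟩
  rw [hβν]
  push_cast
  ring

/-- For `β² > 1/4` and `m ≥ 1`, there are infinitely many negative real eigenvalues of the
Taylor–Goldstein Dirichlet problem accumulating at `0`: there is an injective sequence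
`c_k < 0` with `c_k → 0` such that, for each `k`, the problem
`ψ'' - m²ψ + β²ψ/(y-c_k)² = 0` on `(0,1)`, `ψ(0) = ψ(1) = 0`, has a nontrivial `C²` solution. -/
theorem stmt14 (β : ℝ) (hβ0 : 0 < β) (hβ : 1 / 4 < β ^ 2) (m : ℕ) (hm : 1 ≤ m) :
    ∃ c : ℕ → ℝ, (∀ k, c k < 0) ∧ Function.Injective c ∧ Tendsto c atTop (nhds 0) ∧
      ∀ k, ∃ ψ ψ' ψ'' : ℝ → ℂ,
        ContinuousOn ψ (Set.Icc 0 1) ∧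
        ContinuousOn ψ' (Set.Icc 0 1) ∧
        ContinuousOn ψ'' (Set.Icc 0 1) ∧
        (∀ y ∈ Set.Ioo (0 : ℝ) 1, HasDerivAt ψ (ψ' y) y) ∧
        (∀ y ∈ Set.Ioo (0 : ℝ) 1, HasDerivAt ψ' (ψ'' y) y) ∧
        ψ 0 = 0 ∧ ψ 1 = 0 ∧
        (∀ y ∈ Set.Ioo (0 : ℝ) 1,
          ψ'' y - (m : ℂ) ^ 2 * ψ y +
            (β : ℂ) ^ 2 * ψ y / ((y : ℂ) - ((c k : ℝ) : ℂ)) ^ 2 = 0) ∧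
        ∃ y ∈ Set.Icc (0 : ℝ) 1, ψ y ≠ 0 :=
  stmt14_general β hβ m
end

section
/- Let β > 0, m ≥ 1 an integer, and c ∈ ℝ with c < 0 or c > 1. Suppose ψ, φ₁, φ₂ : [0,1] → ℂ are C² functions vanishing at y = 0 and y = 1, and ρ : [0,1] → ℂ is continuous, such that, writing ω(y) = ψ''(y) − m²ψ(y), the following hold for all y ∈ (0,1): (y−c)²·ω(y) − β²·ψ(y) + 2(y−c)·β²·ρ(y) = 0; φ₁''(y) − m²φ₁(y) = (y−c)·ω(y); φ₂''(y) − m²φ₂(y) = ρ(y); and −φ₁(y) − (y−c)·ψ(y) + (y−c)²·ρ(y) − β²·φ₂(y) = 0. Then ψ''(y) − m²ψ(y) + β²·ψ(y)/(y−c)² = 0 for all y ∈ (0,1). (Equivalently: for c < 0 or c > 1, every generalized eigenvector in ker(L_m − c)² already lies in ker(L_m − c), so the discrete eigenvalue c is semi-simple.) -/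
/-!
`F = φ₁ + β²φ₂` solves the Taylor–Goldstein equation and equals `(y - c)²ρ - (y - c)ψ`. Pairing
this with the equation for `ψ` through the Wronskian `ψ F̄' - ψ' F̄`, which vanishes at both ends,
gives `∫₀¹ 2β²|F|²/(y - c)³ = 0`. Since `(y - c)³` has a fixed sign on `[0,1]`, `F ≡ 0`; hence
`ψ = (y - c)ρ`, and the equation for `ψ` collapses to the Taylor–Goldstein equation.
-/

open Set Complex ComplexConjugate

theorem ContinuousOn.eqOn_zero_of_integral_eq_zero_of_nonneg {f : ℝ → ℝ} {a b : ℝ}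
    (hab : a < b) (hf : ContinuousOn f (Icc a b)) (hf0 : ∀ x ∈ Ioc a b, 0 ≤ f x)
    (hint : ∫ x in a..b, f x = 0) : EqOn f 0 (Ioc a b) := by
  intro x hx
  by_contra hne
  have hpos := intervalIntegral.integral_lt_integral_of_continuousOn_of_le_of_exists_lt hab
    continuousOn_const hf hf0 ⟨x, Ioc_subset_Icc_self hx, lt_of_le_of_ne (hf0 x hx) (Ne.symm hne)⟩
  simp [hint] at hpos

theorem eqOn_zero_of_integral_div_odd_pow_eq_zero {f : ℝ → ℝ} {a b c : ℝ} {n : ℕ} (hn : Odd n)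
    (hab : a < b) (hc : c < a ∨ b < c) (hf : ContinuousOn f (Icc a b))
    (hf0 : ∀ x ∈ Ioc a b, 0 ≤ f x) (hint : ∫ x in a..b, f x / (x - c) ^ n = 0) :
    EqOn f 0 (Ioc a b) := by
  have hcont : ContinuousOn (fun x => f x / (x - c) ^ n) (Icc a b) :=
    hf.div (by fun_prop) fun x hx =>
      pow_ne_zero _ (by rcases hc with h | h <;> linarith [hx.1, hx.2])
  intro x hx
  rcases hc with hc | hc
  · have hpos : ∀ y ∈ Icc a b, 0 < (y - c) ^ n := fun y hy => hn.pow_pos_iff.2 (by linarith [hy.1])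
    have := hcont.eqOn_zero_of_integral_eq_zero_of_nonneg hab
      (fun y hy => div_nonneg (hf0 y hy) (hpos y (Ioc_subset_Icc_self hy)).le)
      hint hx
    simpa [(hpos x (Ioc_subset_Icc_self hx)).ne'] using this
  · have hneg : ∀ y ∈ Icc a b, (y - c) ^ n < 0 := fun y hy => hn.pow_neg_iff.2 (by linarith [hy.2])
    have := hcont.neg.eqOn_zero_of_integral_eq_zero_of_nonneg hab
      (fun y hy => neg_nonneg.2 <|
        div_nonpos_of_nonneg_of_nonpos (hf0 y hy)
          (hneg y (Ioc_subset_Icc_self hy)).le)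
      (by simp [intervalIntegral.integral_neg, hint]) hx
    simpa [(hneg x (Ioc_subset_Icc_self hx)).ne] using this

noncomputable def conjWronskian (u u' v v' : ℝ → ℂ) (x : ℝ) : ℂ :=
  u x * conj (v' x) - u' x * conj (v x)

theorem hasDerivAt_conjWronskian {u u' v v' : ℝ → ℂ} {p q : ℂ} {x : ℝ}
    (hu : HasDerivAt u (u' x) x) (hu' : HasDerivAt u' p x)
    (hv : HasDerivAt v (v' x) x) (hv' : HasDerivAt v' q x) :
    HasDerivAt (conjWronskian u u' v v') (u x * conj q - p * conj (v x)) x := by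
  have hcv : HasDerivAt (fun y => conj (v y)) (conj (v' x)) x := hv.star
  have hcv' : HasDerivAt (fun y => conj (v' y)) (conj q) x := hv'.star
  exact ((hu.mul hcv').sub (hu'.mul hcv)).congr_deriv (by ring)

theorem ContinuousOn.conjWronskian {u u' v v' : ℝ → ℂ} {s : Set ℝ} (hu : ContinuousOn u s)
    (hu' : ContinuousOn u' s) (hv : ContinuousOn v s) (hv' : ContinuousOn v' s) :
    ContinuousOn (conjWronskian u u' v v') s :=
  (hu.mul (continuous_conj.comp_continuousOn hv')).sub
    (hu'.mul (continuous_conj.comp_continuousOn hv))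

theorem conjWronskian_eq_zero {u u' v v' : ℝ → ℂ} {x : ℝ} (hu : u x = 0) (hv : v x = 0) :
    conjWronskian u u' v v' x = 0 := by
  simp [conjWronskian, hu, hv]

/-- With `a = y - c`, `b = β²`, `μ = m²`: the pointwise form of
`(ψ F̄' - ψ' F̄)' = 2β²|F|²/(y - c)³` for `F = φ₁ + β²φ₂`. -/
theorem mul_conj_sub_mul_conj_eq_normSq_div {a b μ : ℝ} {ψ ψ'' ρ f₁ f₁'' f₂ f₂'' : ℂ}
    (ha : a ≠ 0)
    (h₁ : (a : ℂ) ^ 2 * (ψ'' - μ * ψ) - b * ψ + 2 * a * b * ρ = 0)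
    (h₂ : f₁'' - μ * f₁ = a * (ψ'' - μ * ψ))
    (h₃ : f₂'' - μ * f₂ = ρ)
    (h₄ : -f₁ - a * ψ + a ^ 2 * ρ - b * f₂ = 0) :
    ψ * conj (f₁'' + b * f₂'') - ψ'' * conj (f₁ + b * f₂) =
      ((2 * b * normSq (f₁ + b * f₂) / a ^ 3 : ℝ) : ℂ) := by
  set F := f₁ + b * f₂
  have hF : F = a ^ 2 * ρ - a * ψ := by linear_combination -h₄
  have hTG : (a : ℂ) ^ 2 * ((f₁'' + b * f₂'') - μ * F) + b * F = 0 := by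
    linear_combination a * h₁ + a ^ 2 * h₂ + a ^ 2 * b * h₃ - b * h₄
  have hTG' : (a : ℂ) ^ 2 * (conj (f₁'' + b * f₂'') - μ * conj F) + b * conj F = 0 := by
    simpa using congrArg conj hTG
  have ha' : (a : ℂ) ≠ 0 := ofReal_ne_zero.2 ha
  push_cast
  rw [← mul_conj, eq_div_iff (pow_ne_zero 3 ha')]
  linear_combination a * ψ * hTG' - a * conj F * h₁ - 2 * b * conj F * hF

theorem stmt15_general (β : ℝ) (hβ0 : 0 < β) (m : ℕ)
    (c : ℝ) (hc : c < 0 ∨ 1 < c)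
    (ψ ψ' ψ'' φ₁ φ₁' φ₁'' φ₂ φ₂' φ₂'' ρ : ℝ → ℂ)
    (hψ : ContinuousOn ψ (Set.Icc 0 1))
    (hψ' : ContinuousOn ψ' (Set.Icc 0 1))
    (hφ₁ : ContinuousOn φ₁ (Set.Icc 0 1))
    (hφ₁' : ContinuousOn φ₁' (Set.Icc 0 1))
    (hφ₂ : ContinuousOn φ₂ (Set.Icc 0 1))
    (hφ₂' : ContinuousOn φ₂' (Set.Icc 0 1))
    (hdψ1 : ∀ y ∈ Set.Ioo (0 : ℝ) 1, HasDerivAt ψ (ψ' y) y)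
    (hdψ2 : ∀ y ∈ Set.Ioo (0 : ℝ) 1, HasDerivAt ψ' (ψ'' y) y)
    (hdφ₁1 : ∀ y ∈ Set.Ioo (0 : ℝ) 1, HasDerivAt φ₁ (φ₁' y) y)
    (hdφ₁2 : ∀ y ∈ Set.Ioo (0 : ℝ) 1, HasDerivAt φ₁' (φ₁'' y) y)
    (hdφ₂1 : ∀ y ∈ Set.Ioo (0 : ℝ) 1, HasDerivAt φ₂ (φ₂' y) y)
    (hdφ₂2 : ∀ y ∈ Set.Ioo (0 : ℝ) 1, HasDerivAt φ₂' (φ₂'' y) y)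
    (hψ0 : ψ 0 = 0) (hψ1 : ψ 1 = 0)
    (hφ₁0 : φ₁ 0 = 0) (hφ₁1 : φ₁ 1 = 0)
    (hφ₂0 : φ₂ 0 = 0) (hφ₂1 : φ₂ 1 = 0)
    (heq1 : ∀ y ∈ Set.Ioo (0 : ℝ) 1,
      ((y : ℂ) - (c : ℂ)) ^ 2 * (ψ'' y - (m : ℂ) ^ 2 * ψ y) - (β : ℂ) ^ 2 * ψ y +
        2 * ((y : ℂ) - (c : ℂ)) * (β : ℂ) ^ 2 * ρ y = 0)
    (heq2 : ∀ y ∈ Set.Ioo (0 : ℝ) 1,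
      φ₁'' y - (m : ℂ) ^ 2 * φ₁ y = ((y : ℂ) - (c : ℂ)) * (ψ'' y - (m : ℂ) ^ 2 * ψ y))
    (heq3 : ∀ y ∈ Set.Ioo (0 : ℝ) 1, φ₂'' y - (m : ℂ) ^ 2 * φ₂ y = ρ y)
    (heq4 : ∀ y ∈ Set.Ioo (0 : ℝ) 1,
      -φ₁ y - ((y : ℂ) - (c : ℂ)) * ψ y + ((y : ℂ) - (c : ℂ)) ^ 2 * ρ y -
        (β : ℂ) ^ 2 * φ₂ y = 0) :
    ∀ y ∈ Set.Ioo (0 : ℝ) 1,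
      ψ'' y - (m : ℂ) ^ 2 * ψ y + (β : ℂ) ^ 2 * ψ y / ((y : ℂ) - (c : ℂ)) ^ 2 = 0 := by
  set F : ℝ → ℂ := fun z => φ₁ z + ((β ^ 2 : ℝ) : ℂ) * φ₂ z
  set F' : ℝ → ℂ := fun z => φ₁' z + ((β ^ 2 : ℝ) : ℂ) * φ₂' z
  set f : ℝ → ℝ := fun z => 2 * β ^ 2 * normSq (F z)
  have hne : ∀ z ∈ Icc (0 : ℝ) 1, z - c ≠ 0 := fun z hz =>
    sub_ne_zero.2 (by rintro rfl; rcases hc with h | h <;> linarith [hz.1, hz.2])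
  have hF : ContinuousOn F (Icc 0 1) := hφ₁.add (continuousOn_const.mul hφ₂)
  have hf : ContinuousOn f (Icc 0 1) :=
    continuousOn_const.mul (continuous_normSq.comp_continuousOn hF)
  have hW : ∀ z ∈ Ioo (0 : ℝ) 1,
      HasDerivAt (conjWronskian ψ ψ' F F') ((f z / (z - c) ^ 3 : ℝ) : ℂ) z := by
    intro z hz
    rw [← mul_conj_sub_mul_conj_eq_normSq_div (a := z - c) (b := β ^ 2) (μ := (m : ℝ) ^ 2)
      (hne z (Ioo_subset_Icc_self hz)) (by push_cast; exact heq1 z hz)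
      (by push_cast; exact heq2 z hz) (by push_cast; exact heq3 z hz)
      (by push_cast; exact heq4 z hz)]
    exact hasDerivAt_conjWronskian (hdψ1 z hz) (hdψ2 z hz)
      ((hdφ₁1 z hz).add ((hdφ₂1 z hz).const_mul _)) ((hdφ₁2 z hz).add ((hdφ₂2 z hz).const_mul _))
  have hint : ∫ z in (0 : ℝ)..1, f z / (z - c) ^ 3 = 0 := by
    have hcont : ContinuousOn (fun z => f z / (z - c) ^ 3) (Icc 0 1) :=
      hf.div (by fun_prop) fun z hz => pow_ne_zero _ (hne z hz)
    have hFTC := intervalIntegral.integral_eq_sub_of_hasDeriv_right_of_le zero_le_one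
      (hψ.conjWronskian hψ' hF (hφ₁'.add (continuousOn_const.mul hφ₂')))
      (fun z hz => (hW z hz).hasDerivWithinAt)
      ((continuous_ofReal.comp_continuousOn hcont).intervalIntegrable_of_Icc zero_le_one)
    rw [conjWronskian_eq_zero hψ1 (by simp [F, hφ₁1, hφ₂1]),
      conjWronskian_eq_zero hψ0 (by simp [F, hφ₁0, hφ₂0]), sub_zero,
      intervalIntegral.integral_ofReal] at hFTC
    exact_mod_cast hFTC
  intro y hy
  have hFy : F y = 0 := by
    have := eqOn_zero_of_integral_div_odd_pow_eq_zero (by decide) zero_lt_one (by simpa using hc) hf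
      (fun z _ => mul_nonneg (by positivity) (normSq_nonneg _)) hint (Ioo_subset_Ioc_self hy)
    simpa [f, hβ0.ne'] using this
  have ha : (y : ℂ) - c ≠ 0 := by exact_mod_cast hne y (Ioo_subset_Icc_self hy)
  have hψρ : ((y : ℂ) - c) * ρ y = ψ y := by
    refine sub_eq_zero.1 ((mul_eq_zero.1 ?_).resolve_left ha)
    linear_combination heq4 y hy + (by simpa [F] using hFy : φ₁ y + (β : ℂ) ^ 2 * φ₂ y = 0)
  field_simp
  linear_combination heq1 y hy - 2 * (β : ℂ) ^ 2 * hψρ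

/-- Semi-simplicity of discrete eigenvalues: for `β > 0`, `m ≥ 1` and real `c` with `c < 0` or
`c > 1`, if `ψ, φ₁, φ₂ : [0,1] → ℂ` are `C²` (with the indicated derivatives), vanish at `0`
and `1`, `ρ` is continuous, `ω = ψ'' - m²ψ`, and on `(0,1)`:
`(y-c)² ω - β² ψ + 2(y-c) β² ρ = 0`, `φ₁'' - m²φ₁ = (y-c) ω`, `φ₂'' - m²φ₂ = ρ`,
`-φ₁ - (y-c) ψ + (y-c)² ρ - β² φ₂ = 0`, then `ψ'' - m²ψ + β²ψ/(y-c)² = 0` on `(0,1)`. -/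
theorem stmt15 (β : ℝ) (hβ0 : 0 < β) (m : ℕ) (hm : 1 ≤ m)
    (c : ℝ) (hc : c < 0 ∨ 1 < c)
    (ψ ψ' ψ'' φ₁ φ₁' φ₁'' φ₂ φ₂' φ₂'' ρ : ℝ → ℂ)
    (hψ : ContinuousOn ψ (Set.Icc 0 1))
    (hψ' : ContinuousOn ψ' (Set.Icc 0 1))
    (hψ'' : ContinuousOn ψ'' (Set.Icc 0 1))
    (hφ₁ : ContinuousOn φ₁ (Set.Icc 0 1))
    (hφ₁' : ContinuousOn φ₁' (Set.Icc 0 1))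
    (hφ₁'' : ContinuousOn φ₁'' (Set.Icc 0 1))
    (hφ₂ : ContinuousOn φ₂ (Set.Icc 0 1))
    (hφ₂' : ContinuousOn φ₂' (Set.Icc 0 1))
    (hφ₂'' : ContinuousOn φ₂'' (Set.Icc 0 1))
    (hρ : ContinuousOn ρ (Set.Icc 0 1))
    (hdψ1 : ∀ y ∈ Set.Ioo (0 : ℝ) 1, HasDerivAt ψ (ψ' y) y)
    (hdψ2 : ∀ y ∈ Set.Ioo (0 : ℝ) 1, HasDerivAt ψ' (ψ'' y) y)
    (hdφ₁1 : ∀ y ∈ Set.Ioo (0 : ℝ) 1, HasDerivAt φ₁ (φ₁' y) y)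
    (hdφ₁2 : ∀ y ∈ Set.Ioo (0 : ℝ) 1, HasDerivAt φ₁' (φ₁'' y) y)
    (hdφ₂1 : ∀ y ∈ Set.Ioo (0 : ℝ) 1, HasDerivAt φ₂ (φ₂' y) y)
    (hdφ₂2 : ∀ y ∈ Set.Ioo (0 : ℝ) 1, HasDerivAt φ₂' (φ₂'' y) y)
    (hψ0 : ψ 0 = 0) (hψ1 : ψ 1 = 0)
    (hφ₁0 : φ₁ 0 = 0) (hφ₁1 : φ₁ 1 = 0)
    (hφ₂0 : φ₂ 0 = 0) (hφ₂1 : φ₂ 1 = 0)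
    (heq1 : ∀ y ∈ Set.Ioo (0 : ℝ) 1,
      ((y : ℂ) - (c : ℂ)) ^ 2 * (ψ'' y - (m : ℂ) ^ 2 * ψ y) - (β : ℂ) ^ 2 * ψ y +
        2 * ((y : ℂ) - (c : ℂ)) * (β : ℂ) ^ 2 * ρ y = 0)
    (heq2 : ∀ y ∈ Set.Ioo (0 : ℝ) 1,
      φ₁'' y - (m : ℂ) ^ 2 * φ₁ y = ((y : ℂ) - (c : ℂ)) * (ψ'' y - (m : ℂ) ^ 2 * ψ y))
    (heq3 : ∀ y ∈ Set.Ioo (0 : ℝ) 1, φ₂'' y - (m : ℂ) ^ 2 * φ₂ y = ρ y)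
    (heq4 : ∀ y ∈ Set.Ioo (0 : ℝ) 1,
      -φ₁ y - ((y : ℂ) - (c : ℂ)) * ψ y + ((y : ℂ) - (c : ℂ)) ^ 2 * ρ y -
        (β : ℂ) ^ 2 * φ₂ y = 0) :
    ∀ y ∈ Set.Ioo (0 : ℝ) 1,
      ψ'' y - (m : ℂ) ^ 2 * ψ y + (β : ℂ) ^ 2 * ψ y / ((y : ℂ) - (c : ℂ)) ^ 2 = 0 :=
  stmt15_general β hβ0 m c hc ψ ψ' ψ'' φ₁ φ₁' φ₁'' φ₂ φ₂' φ₂'' ρ hψ hψ' hφ₁ hφ₁' hφ₂ hφ₂' hdψ1 hdψ2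
    hdφ₁1 hdφ₁2 hdφ₂1 hdφ₂2 hψ0 hψ1 hφ₁0 hφ₁1 hφ₂0 hφ₂1 heq1 heq2 heq3 heq4
end
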